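/- arXiv:1706.00914 — 14 statements merged into one kernel-verified Lean document; each statement's English description precedes it below -/
import Mathlib

section
/- Let f(x) = c₁x^{d₁} + ⋯ + c_t x^{d_t} ∈ ℤ[x] with nonzero integer coefficients |cᵢ| ≤ C and d₁ < ⋯ < d_t. If β ≥ 2C + 1 is an integer, then for any natural number k: |f(β)/β^k| > 1/2 if k ≤ d_t, and |f(β)/β^k| < 1/2 if k > d_t. -/
open Polynomial

theorem stmt2 (f : Polynomial ℤ) (hf : f ≠ 0) (C β : ℤ)
    (hC : ∀ i, |f.coeff i| ≤ C) (hβ : β ≥ 2 * C + 1) (k : ℕ) :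
    (k ≤ f.natDegree → (1 : ℚ) / 2 < |((f.eval β : ℤ) : ℚ)| / (β : ℚ) ^ k) ∧
    (k > f.natDegree → |((f.eval β : ℤ) : ℚ)| / (β : ℚ) ^ k < (1 : ℚ) / 2) := by
  set d := f.natDegree with hd
  have hlead : f.coeff d ≠ 0 := mt Polynomial.leadingCoeff_eq_zero.mp hf
  have hC1 : 1 ≤ |f.coeff d| := Int.one_le_abs hlead
  have hCpos : 1 ≤ C := le_trans hC1 (hC d)
  have hβ3 : 3 ≤ β := by linarith
  have hβ0 : (0:ℤ) ≤ β := by linarith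
  set G : ℤ := ∑ i ∈ Finset.range d, β ^ i with hGdef
  have hG : 0 ≤ G := Finset.sum_nonneg fun i _ => pow_nonneg hβ0 i
  have hGmul : G * (β - 1) = β ^ d - 1 := geom_sum_mul β d
  set S : ℤ := ∑ i ∈ Finset.range d, f.coeff i * β ^ i with hSdef
  have hS : |S| ≤ C * G := by
    calc |S| ≤ ∑ i ∈ Finset.range d, |f.coeff i * β ^ i| :=
          Finset.abs_sum_le_sum_abs _ _
      _ ≤ ∑ i ∈ Finset.range d, C * β ^ i := by
          refine Finset.sum_le_sum fun i _ => ?_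
          rw [abs_mul, abs_pow, abs_of_nonneg hβ0]
          exact mul_le_mul_of_nonneg_right (hC i) (pow_nonneg hβ0 i)
      _ = C * G := by rw [hGdef, Finset.mul_sum]
  have h2S : 2 * |S| ≤ β ^ d - 1 := by
    have h1 : 2 * (C * G) = G * (2 * C) := by ring
    have h2 : G * (2 * C) ≤ G * (β - 1) :=
      mul_le_mul_of_nonneg_left (by linarith) hG
    linarith
  have heval : f.eval β = S + f.coeff d * β ^ d := by
    rw [Polynomial.eval_eq_sum_range, Finset.sum_range_succ]
  have hcd : β ^ d ≤ |f.coeff d * β ^ d| := by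
    rw [abs_mul, abs_pow, abs_of_nonneg hβ0]
    nlinarith [pow_nonneg hβ0 d]
  have habs1 : |f.coeff d * β ^ d| ≤ |f.eval β| + |S| := by
    have : f.coeff d * β ^ d = f.eval β - S := by rw [heval]; ring
    rw [this]
    exact abs_sub _ _
  have hlow : β ^ d < 2 * |f.eval β| := by linarith
  have hhigh : 2 * |f.eval β| < β ^ (d + 1) := by
    have h1 : |f.eval β| ≤ |S| + |f.coeff d * β ^ d| := by
      rw [heval]; exact abs_add_le _ _
    have h2 : |f.coeff d * β ^ d| ≤ C * β ^ d := by
      rw [abs_mul, abs_pow, abs_of_nonneg hβ0]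
      exact mul_le_mul_of_nonneg_right (hC d) (pow_nonneg hβ0 d)
    have h3 : 2 * C * β ^ d ≤ (β - 1) * β ^ d :=
      mul_le_mul_of_nonneg_right (by linarith) (pow_nonneg hβ0 d)
    have h4 : (β - 1) * β ^ d = β ^ (d + 1) - β ^ d := by ring
    have h5 : (1:ℤ) ≤ β ^ d := one_le_pow₀ (by linarith : (1:ℤ) ≤ β)
    linarith
  have hβQ : (0:ℚ) < (β:ℚ) := by exact_mod_cast (by linarith : (0:ℤ) < β)
  have hβQ1 : (1:ℚ) ≤ (β:ℚ) := by exact_mod_cast (by linarith : (1:ℤ) ≤ β)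
  have hpk : (0:ℚ) < (β:ℚ) ^ k := pow_pos hβQ k
  have hlowQ : ((β:ℚ)) ^ d < 2 * |((f.eval β : ℤ) : ℚ)| := by exact_mod_cast hlow
  have hhighQ : 2 * |((f.eval β : ℤ) : ℚ)| < (β:ℚ) ^ (d + 1) := by exact_mod_cast hhigh
  constructor
  · intro hk
    rw [lt_div_iff₀ hpk]
    have : (β:ℚ) ^ k ≤ (β:ℚ) ^ d := pow_le_pow_right₀ hβQ1 hk
    linarith
  · intro hk
    rw [div_lt_iff₀ hpk]
    have : (β:ℚ) ^ (d + 1) ≤ (β:ℚ) ^ k := pow_le_pow_right₀ hβQ1 hk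
    linarith
end

section
/- Let f ∈ ℤ[x] be nonzero with coefficients bounded in absolute value by C ≥ 1. If β is an integer with β ≥ 2C + 1, then deg(f) = ⌊log_β(2|f(β)|)⌋. -/
open Polynomial

theorem stmt3 (f : Polynomial ℤ) (hf : f ≠ 0) (C : ℕ) (hC1 : 1 ≤ C)
    (hC : ∀ i, |f.coeff i| ≤ (C : ℤ)) (β : ℕ) (hβ : β ≥ 2 * C + 1) :
    f.natDegree = Nat.log β (2 * (f.eval (β : ℤ)).natAbs) := by
  set d := f.natDegree with hd
  have hβ2 : 2 * (C : ℤ) + 1 ≤ (β : ℤ) := by exact_mod_cast hβ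
  have hC1' : (1 : ℤ) ≤ C := by exact_mod_cast hC1
  have hβpos : (0 : ℤ) < β := by linarith
  have hlead : 1 ≤ |f.coeff d| := by
    exact Int.one_le_abs (Polynomial.leadingCoeff_ne_zero.mpr hf)
  set R := ∑ i ∈ Finset.range d, f.coeff i * (β : ℤ) ^ i with hRdef
  have hS0 : (0 : ℤ) ≤ ∑ i ∈ Finset.range d, (β : ℤ) ^ i :=
    Finset.sum_nonneg fun i _ => pow_nonneg hβpos.le i
  have hsum : |R| ≤ (C : ℤ) * ∑ i ∈ Finset.range d, (β : ℤ) ^ i := by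
    rw [Finset.mul_sum]
    refine (Finset.abs_sum_le_sum_abs _ _).trans (Finset.sum_le_sum fun i _ => ?_)
    rw [abs_mul, abs_pow, abs_of_nonneg hβpos.le]
    exact mul_le_mul_of_nonneg_right (hC i) (pow_nonneg hβpos.le i)
  have hgeom : (∑ i ∈ Finset.range d, (β : ℤ) ^ i) * ((β : ℤ) - 1) = (β : ℤ) ^ d - 1 :=
    geom_sum_mul _ _
  have hR : 2 * |R| ≤ (β : ℤ) ^ d - 1 := by nlinarith [abs_nonneg R]
  have heval : f.eval (β : ℤ) = f.coeff d * (β : ℤ) ^ d + R := by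
    rw [hRdef, Polynomial.eval_eq_sum_range, Finset.sum_range_succ]; ring
  set E := f.eval (β : ℤ) with hE
  have hA : |f.coeff d * (β : ℤ) ^ d| = |f.coeff d| * (β : ℤ) ^ d := by
    rw [abs_mul, abs_pow, abs_of_nonneg hβpos.le]
  have h1 : |f.coeff d * (β : ℤ) ^ d| ≤ |E| + |R| := by
    calc |f.coeff d * (β : ℤ) ^ d| = |E + -R| := by rw [heval]; ring_nf
    _ ≤ |E| + |R| := by simpa using abs_add_le E (-R)
  have h2 : |E| ≤ |f.coeff d * (β : ℤ) ^ d| + |R| := by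
    rw [heval]; exact abs_add_le _ _
  have hpowpos : (0 : ℤ) < (β : ℤ) ^ d := pow_pos hβpos d
  have hlow : (β : ℤ) ^ d ≤ 2 * |E| := by nlinarith
  have hhigh : 2 * |E| < (β : ℤ) ^ (d + 1) := by
    have : (β : ℤ) ^ (d + 1) = (β : ℤ) ^ d * (β : ℤ) := pow_succ _ _
    nlinarith [hC d]
  have habs : |E| = (E.natAbs : ℤ) := Int.abs_eq_natAbs E
  refine (Nat.log_eq_of_pow_le_of_lt_pow ?_ ?_).symm
  · have : ((β ^ d : ℕ) : ℤ) ≤ ((2 * E.natAbs : ℕ) : ℤ) := by push_cast; linarith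
    exact_mod_cast this
  · have : ((2 * E.natAbs : ℕ) : ℤ) < ((β ^ (d + 1) : ℕ) : ℤ) := by push_cast; linarith
    exact_mod_cast this
end

section
/- Let f, g ∈ ℤ[x] be polynomials with coefficients bounded in absolute value by C ≥ 1. If β is an integer with β ≥ √(2C), and f(β) = g(β) and f(β+1) = g(β+1), then f = g. -/
/-!
Put `h = f - g`. It vanishes at `β` and `β + 1`, and since `X - β` and `X - (β + 1)` are coprime,
`h = (X - β) (X - (β + 1)) q`. If `h ≠ 0`, its lowest nonzero coefficient is `β (β + 1)` times
that of `q`, so it is at least `β (β + 1) > β² ≥ 2C` in absolute value, while the coefficients of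
`f - g` are bounded by `2C`.
-/

open Polynomial

namespace Polynomial

theorem abs_coeff_zero_le_abs_trailingCoeff {p : ℤ[X]} : |p.coeff 0| ≤ |p.trailingCoeff| := by
  by_cases h0 : p.coeff 0 = 0
  · simp [h0]
  · rw [trailingCoeff_eq_coeff_zero h0]

theorem abs_trailingCoeff_le_of_dvd {p h : ℤ[X]} (hdvd : p ∣ h) (h0 : h ≠ 0) :
    |p.trailingCoeff| ≤ |h.trailingCoeff| := by
  obtain ⟨q, rfl⟩ := hdvd
  have hq : q.trailingCoeff ≠ 0 := trailingCoeff_nonzero_iff_nonzero.mpr (right_ne_zero_of_mul h0)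
  rw [trailingCoeff_mul, abs_mul]
  exact le_mul_of_one_le_right (abs_nonneg _) (Int.one_le_abs hq)

theorem mul_X_sub_C_dvd_of_isUnit_sub {R : Type*} [CommRing R] {a b : R} {h : R[X]}
    (hab : IsUnit (a - b)) (ha : h.IsRoot a) (hb : h.IsRoot b) : (X - C a) * (X - C b) ∣ h :=
  (isCoprime_X_sub_C_of_isUnit_sub hab).mul_dvd (dvd_iff_isRoot.mpr ha) (dvd_iff_isRoot.mpr hb)

theorem abs_trailingCoeff_sub_le {f g : ℤ[X]} {C : ℤ} (hf : ∀ i, |f.coeff i| ≤ C)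
    (hg : ∀ i, |g.coeff i| ≤ C) : |(f - g).trailingCoeff| ≤ 2 * C := by
  have := abs_sub (f.coeff (f - g).natTrailingDegree) (g.coeff (f - g).natTrailingDegree)
  rw [trailingCoeff, coeff_sub]
  linarith [hf (f - g).natTrailingDegree, hg (f - g).natTrailingDegree]

end Polynomial

theorem stmt5_general (f g : Polynomial ℤ) (C β : ℤ)
    (hfC : ∀ i, |f.coeff i| ≤ C) (hgC : ∀ i, |g.coeff i| ≤ C)
    (hβ : (β : ℝ) ≥ Real.sqrt (2 * (C : ℝ)))
    (heq1 : f.eval β = g.eval β) (heq2 : f.eval (β + 1) = g.eval (β + 1)) :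
    f = g := by
  by_contra hne
  have hβ0 : 0 ≤ β := by exact_mod_cast (Real.sqrt_nonneg _).trans hβ
  have hβsq : 2 * C ≤ β ^ 2 := by
    exact_mod_cast (Real.sqrt_le_left (by exact_mod_cast hβ0)).mp hβ
  have hdvd : (X - Polynomial.C β) * (X - Polynomial.C (β + 1)) ∣ f - g :=
    mul_X_sub_C_dvd_of_isUnit_sub (by simp) (by simp [heq1]) (by simp [heq2])
  have hlow : |β * (β + 1)| ≤ |(f - g).trailingCoeff| := by
    have := abs_coeff_zero_le_abs_trailingCoeff.trans
      (abs_trailingCoeff_le_of_dvd hdvd (sub_ne_zero.mpr hne))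
    simpa only [mul_coeff_zero, coeff_sub, coeff_X_zero, coeff_C_zero, zero_sub, neg_mul_neg]
      using this
  have hne0 : 1 ≤ |(f - g).trailingCoeff| :=
    Int.one_le_abs (trailingCoeff_nonzero_iff_nonzero.mpr (sub_ne_zero.mpr hne))
  rw [abs_of_nonneg (by positivity)] at hlow
  nlinarith [abs_trailingCoeff_sub_le hfC hgC]

theorem stmt5 (f g : Polynomial ℤ) (C β : ℤ) (hC1 : 1 ≤ C)
    (hfC : ∀ i, |f.coeff i| ≤ C) (hgC : ∀ i, |g.coeff i| ≤ C)
    (hβ : (β : ℝ) ≥ Real.sqrt (2 * (C : ℝ)))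
    (heq1 : f.eval β = g.eval β) (heq2 : f.eval (β + 1) = g.eval (β + 1)) :
    f = g :=
  stmt5_general f g C β hfC hgC hβ heq1 heq2
end

section
/- Let h = f/g with f, g ∈ ℤ[x], gcd(f,g) = 1, and suppose #f ≤ T, #g ≤ T (number of nonzero terms) and ‖f‖_∞ ≤ C, ‖g‖_∞ ≤ C. Let β ≥ 2TC² + 1 be an integer with g(β) ≠ 0. If f₁, g₁ ∈ ℤ[x] also satisfy ‖f₁‖_∞ ≤ C, ‖g₁‖_∞ ≤ C, #f₁ ≤ T, #g₁ ≤ T, g₁(β) ≠ 0, and f(β)·g₁(β) = f₁(β)·g(β), then f·g₁ = f₁·g as polynomials, hence f₁/g₁ = f/g as rational functions. -/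
/-! Both `f * g₁` and `f₁ * g` have coefficients of absolute value at most `T C²`, so their
difference `p` has coefficients of absolute value below `β`, and `p(β) = 0`. Reading this
equation modulo `β` kills the constant coefficient of `p`, and dividing by `X` and repeating
kills all of them: an integer polynomial whose coefficients are smaller than `|β|` is determined
by its value at `β`. -/

open Polynomial

theorem Polynomial.abs_coeff_mul_le {R : Type*}
    [CommRing R] [LinearOrder R] [IsStrictOrderedRing R]
    {f g : R[X]} {A B : R} (hf : ∀ i, |f.coeff i| ≤ A) (hg : ∀ i, |g.coeff i| ≤ B) (n : ℕ) :
    |(f * g).coeff n| ≤ f.support.card * (A * B) := by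
  have hB : 0 ≤ B := (abs_nonneg _).trans (hg 0)
  have hshift : ∀ i, |(X ^ i * g).coeff n| ≤ B := fun i => by
    rw [coeff_X_pow_mul']
    split_ifs
    exacts [hg _, by simpa using hB]
  have hexpand : (f * g).coeff n = ∑ i ∈ f.support, f.coeff i * (X ^ i * g).coeff n := by
    conv_lhs => rw [f.as_sum_support_C_mul_X_pow]
    simp only [Finset.sum_mul, finsetSum_coeff, mul_assoc, coeff_C_mul]
  rw [hexpand, ← nsmul_eq_mul]
  refine (Finset.abs_sum_le_sum_abs _ _).trans (Finset.sum_le_card_nsmul _ _ _ fun i _ => ?_)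
  rw [abs_mul]
  exact mul_le_mul (hf i) (hshift i) (abs_nonneg _) ((abs_nonneg _).trans (hf i))

theorem Polynomial.eq_zero_of_eval_eq_zero_of_abs_coeff_lt {p : ℤ[X]} {β : ℤ}
    (hcoeff : ∀ i, |p.coeff i| < |β|) (hp : p.eval β = 0) : p = 0 := by
  suffices ∀ n, ∀ p : ℤ[X], p.natDegree ≤ n → (∀ i, |p.coeff i| < |β|) → p.eval β = 0 →
      p = 0 from this _ p le_rfl hcoeff hp
  intro n
  induction n with
  | zero =>
    intro p hdeg _ hp
    rw [eq_C_of_natDegree_le_zero hdeg] at hp ⊢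
    simpa using hp
  | succ n ih =>
    intro p hdeg hcoeff hp
    have hβ : β ≠ 0 := abs_pos.mp ((abs_nonneg _).trans_lt (hcoeff 0))
    have hsplit : p.divX * X + C (p.coeff 0) = p := divX_mul_X_add p
    have heval : p.divX.eval β * β + p.coeff 0 = 0 := by
      simpa [hp] using congrArg (eval β) hsplit
    have hcoeff0 : p.coeff 0 = 0 :=
      Int.eq_zero_of_abs_lt_dvd ((abs_dvd _ _).mpr ⟨-p.divX.eval β, by linarith⟩) (hcoeff 0)
    have hdivX : p.divX = 0 := by
      refine ih p.divX ?_ (fun i => by simpa [coeff_divX] using hcoeff (i + 1)) ?_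
      · rw [natDegree_divX_eq_natDegree_tsub_one]
        omega
      · simpa [hcoeff0, hβ] using heval
    rw [← hsplit, hdivX, hcoeff0, zero_mul, zero_add, C_0]

theorem stmt6_general (f g f₁ g₁ : Polynomial ℤ) (T C : ℕ) (β : ℤ)
    (hTf : f.support.card ≤ T)
    (hTf₁ : f₁.support.card ≤ T)
    (hfC : ∀ i, |f.coeff i| ≤ (C : ℤ)) (hgC : ∀ i, |g.coeff i| ≤ (C : ℤ))
    (hf₁C : ∀ i, |f₁.coeff i| ≤ (C : ℤ)) (hg₁C : ∀ i, |g₁.coeff i| ≤ (C : ℤ))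
    (hβ : β ≥ 2 * T * C ^ 2 + 1)
    (heq : f.eval β * g₁.eval β = f₁.eval β * g.eval β) :
    f * g₁ = f₁ * g := by
  have hprod : ∀ {u v : ℤ[X]}, u.support.card ≤ T → (∀ i, |u.coeff i| ≤ C) →
      (∀ i, |v.coeff i| ≤ C) → ∀ i, |(u * v).coeff i| ≤ T * C ^ 2 := fun hT hu hv i =>
    (abs_coeff_mul_le hu hv i).trans (by rw [← sq]; gcongr)
  have hcoeff : ∀ i, |(f * g₁ - f₁ * g).coeff i| < |β| := fun i => by
    have hβ0 : (0 : ℤ) ≤ 2 * T * C ^ 2 := by positivity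
    rw [coeff_sub, abs_of_pos (show 0 < β by linarith)]
    linarith [abs_sub ((f * g₁).coeff i) ((f₁ * g).coeff i), hprod hTf hfC hg₁C i,
      hprod hTf₁ hf₁C hgC i]
  have heval : (f * g₁ - f₁ * g).eval β = 0 := by
    rw [eval_sub, eval_mul, eval_mul, heq, sub_self]
  exact sub_eq_zero.mp (eq_zero_of_eval_eq_zero_of_abs_coeff_lt hcoeff heval)

theorem stmt6 (f g f₁ g₁ : Polynomial ℤ) (T C : ℕ) (β : ℤ)
    (hcop : IsRelPrime f g)
    (hTf : f.support.card ≤ T) (hTg : g.support.card ≤ T)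
    (hTf₁ : f₁.support.card ≤ T) (hTg₁ : g₁.support.card ≤ T)
    (hfC : ∀ i, |f.coeff i| ≤ (C : ℤ)) (hgC : ∀ i, |g.coeff i| ≤ (C : ℤ))
    (hf₁C : ∀ i, |f₁.coeff i| ≤ (C : ℤ)) (hg₁C : ∀ i, |g₁.coeff i| ≤ (C : ℤ))
    (hβ : β ≥ 2 * T * C ^ 2 + 1)
    (hgβ : g.eval β ≠ 0) (hg₁β : g₁.eval β ≠ 0)
    (heq : f.eval β * g₁.eval β = f₁.eval β * g.eval β) :
    f * g₁ = f₁ * g :=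
  stmt6_general f g f₁ g₁ T C β hTf hTf₁ hfC hgC hf₁C hg₁C hβ heq
end

section
/- Let f(x) = c₁x^{d₁} + ⋯ + c_t x^{d_t} ∈ ℤ[x] with nonzero integer coefficients, |cᵢ| ≤ C, d₁ < ⋯ < d_t. Let β ≥ 2C+1 be an integer and set Q = (f(β)/β^{d_t}) / (f(β+1)/(β+1)^{d_t}) and E = 1 + 2C/(β(β−1)). Then 1/E < Q < E. -/
/-
Dividing by `β ^ d` turns `f(β) / β ^ d` into `g(1/β)`, where `g = f.reverse` has constant term
the leading coefficient `a` of `f`, with `|a| ≥ 1`. Comparing termwise with the geometric series,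
coefficients bounded by `C` give `|g u - g v| < C ((1 - u)⁻¹ - (1 - v)⁻¹)` for `0 ≤ v < u < 1`.
With `v = 0` this puts `g(1/β)` and `g(1/(β+1))` within `C/(β-1) ≤ 1/2` of `a`; with `u = 1/β`,
`v = 1/(β+1)` it gives `|g(1/β) - g(1/(β+1))| < C/(β(β-1)) =: δ`. Two numbers of the same sign,
each of absolute value at least `1/2`, that differ by less than `δ` have ratio in
`(1/(1+2δ), 1+2δ)`.
-/

open Polynomial Finset

lemma Polynomial.eval_reverse_inv {F : Type*} [Field F] (p : F[X]) {x : F} (hx : x ≠ 0) :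
    p.reverse.eval x⁻¹ = p.eval x / x ^ p.natDegree := by
  let _ := invertibleOfNonzero hx
  rw [eq_div_iff (pow_ne_zero _ hx), ← invOf_eq_inv]
  exact eval₂_reverse_mul_pow (RingHom.id F) x p

variable {K : Type*} [Field K] [LinearOrder K] [IsStrictOrderedRing K]

lemma sum_range_pow_sub_pow_lt {u v : K} (hv : 0 ≤ v) (hvu : v < u) (hu : u < 1) (n : ℕ) :
    ∑ i ∈ range n, (u ^ i - v ^ i) < (1 - u)⁻¹ - (1 - v)⁻¹ := by
  have geom {x : K} (hx : x < 1) : ∑ i ∈ range n, x ^ i = (1 - x)⁻¹ - x ^ n * (1 - x)⁻¹ := by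
    rw [← one_sub_mul, ← geom_sum_mul_neg x n, mul_inv_cancel_right₀ (sub_ne_zero.2 hx.ne')]
  have tail : v ^ n * (1 - v)⁻¹ < u ^ n * (1 - u)⁻¹ :=
    calc v ^ n * (1 - v)⁻¹ ≤ u ^ n * (1 - v)⁻¹ := by
          gcongr
          exact inv_nonneg.2 (by linarith)
      _ < u ^ n * (1 - u)⁻¹ := by
        gcongr
        exact pow_pos (hv.trans_lt hvu) n
  rw [sum_sub_distrib, geom hu, geom (hvu.trans hu)]
  linarith

lemma div_mem_Ioo_of_one_le {a A B δ : K} (ha : 1 ≤ a) (hA : |A - a| ≤ 1 / 2)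
    (hB : |B - a| ≤ 1 / 2) (hAB : |A - B| < δ) :
    A / B ∈ Set.Ioo (1 / (1 + 2 * δ)) (1 + 2 * δ) := by
  obtain ⟨hA₁, -⟩ := abs_le.1 hA
  obtain ⟨hB₁, -⟩ := abs_le.1 hB
  obtain ⟨hAB₁, hAB₂⟩ := abs_lt.1 hAB
  have hδ : 0 < δ := (abs_nonneg _).trans_lt hAB
  have hB₀ : 0 < B := by linarith
  constructor
  · rw [div_lt_div_iff₀ (by positivity) hB₀]
    nlinarith
  · rw [div_lt_iff₀ hB₀]
    nlinarith

lemma div_mem_Ioo_of_one_le_abs {a A B δ : K} (ha : 1 ≤ |a|) (hA : |A - a| ≤ 1 / 2)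
    (hB : |B - a| ≤ 1 / 2) (hAB : |A - B| < δ) :
    A / B ∈ Set.Ioo (1 / (1 + 2 * δ)) (1 + 2 * δ) := by
  rcases le_abs'.1 ha with ha | ha
  · simpa only [neg_div_neg_eq] using
      div_mem_Ioo_of_one_le (a := -a) (A := -A) (B := -B) (by linarith)
      (by rwa [neg_sub_neg, abs_sub_comm]) (by rwa [neg_sub_neg, abs_sub_comm])
      (by rwa [neg_sub_neg, abs_sub_comm])
  · exact div_mem_Ioo_of_one_le ha hA hB hAB

namespace Polynomial

lemma abs_eval_sub_eval_lt (p : K[X]) {C u v : K} (hC0 : 0 < C) (hC : ∀ i, |p.coeff i| ≤ C)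
    (hv : 0 ≤ v) (hvu : v < u) (hu : u < 1) :
    |p.eval u - p.eval v| < C * ((1 - u)⁻¹ - (1 - v)⁻¹) := by
  rw [eval_eq_sum_range, eval_eq_sum_range, ← sum_sub_distrib]
  calc |∑ i ∈ range (p.natDegree + 1), (p.coeff i * u ^ i - p.coeff i * v ^ i)|
      ≤ ∑ i ∈ range (p.natDegree + 1), C * (u ^ i - v ^ i) := by
        refine (abs_sum_le_sum_abs _ _).trans (sum_le_sum fun i _ => ?_)
        have : 0 ≤ u ^ i - v ^ i := sub_nonneg.2 (pow_le_pow_left₀ hv hvu.le i)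
        rw [← mul_sub, abs_mul, abs_of_nonneg this]
        exact mul_le_mul_of_nonneg_right (hC i) this
    _ < C * ((1 - u)⁻¹ - (1 - v)⁻¹) := by
        rw [← mul_sum]
        exact mul_lt_mul_of_pos_left (sum_range_pow_sub_pow_lt hv hvu hu _) hC0

lemma eval_div_pow_div_eval_div_pow_mem_Ioo (p : K[X]) {C β : K} (hC : ∀ i, |p.coeff i| ≤ C)
    (hlead : 1 ≤ |p.leadingCoeff|) (hβ : 2 * C + 1 ≤ β) :
    (p.eval β / β ^ p.natDegree) / (p.eval (β + 1) / (β + 1) ^ p.natDegree) ∈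
      Set.Ioo (1 / (1 + 2 * C / (β * (β - 1)))) (1 + 2 * C / (β * (β - 1))) := by
  have hC₁ : 1 ≤ C := hlead.trans (hC _)
  have hβ₀ : 0 < β := by linarith
  have hrev : ∀ i, |p.reverse.coeff i| ≤ C := fun i => by rw [coeff_reverse]; exact hC _
  have one_sub_inv_inv {y : K} (hy : β ≤ y) : (1 - y⁻¹)⁻¹ = 1 + (y - 1)⁻¹ := by
    have : y - 1 ≠ 0 := by intro h; linarith
    have : y ≠ 0 := by intro h; linarith
    field_simp
    ring
  have near_lead {y : K} (hy : β ≤ y) : |p.reverse.eval y⁻¹ - p.leadingCoeff| ≤ 1 / 2 := by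
    rw [← coeff_zero_reverse, coeff_zero_eq_eval_zero]
    refine (abs_eval_sub_eval_lt _ (by linarith) hrev le_rfl (inv_pos.2 (by linarith))
      (inv_lt_one_of_one_lt₀ (by linarith))).le.trans ?_
    rw [one_sub_inv_inv hy, sub_zero, inv_one, add_sub_cancel_left, ← div_eq_mul_inv,
      div_le_iff₀ (by linarith)]
    linarith
  rw [← eval_reverse_inv p (by positivity), ← eval_reverse_inv p (by positivity), mul_div_assoc]
  refine div_mem_Ioo_of_one_le_abs (a := p.leadingCoeff) hlead (near_lead le_rfl)
    (near_lead (by linarith)) ((abs_eval_sub_eval_lt _ (by linarith) hrev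
      (inv_pos.2 (by linarith)).le (inv_strictAnti₀ (by linarith) (by linarith))
      (inv_lt_one_of_one_lt₀ (by linarith))).trans_eq ?_)
  rw [one_sub_inv_inv le_rfl, one_sub_inv_inv (by linarith), add_sub_cancel_right]
  have : β - 1 ≠ 0 := by intro h; linarith
  field_simp
  ring

end Polynomial

theorem stmt9 (f : Polynomial ℤ) (hf : f ≠ 0) (C β : ℤ)
    (hC : ∀ i, |f.coeff i| ≤ C) (hβ : β ≥ 2 * C + 1) :
    (1 : ℚ) / (1 + 2 * (C : ℚ) / ((β : ℚ) * ((β : ℚ) - 1))) <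
      (((f.eval β : ℤ) : ℚ) / (β : ℚ) ^ f.natDegree) /
        (((f.eval (β + 1) : ℤ) : ℚ) / ((β : ℚ) + 1) ^ f.natDegree) ∧
    (((f.eval β : ℤ) : ℚ) / (β : ℚ) ^ f.natDegree) /
        (((f.eval (β + 1) : ℤ) : ℚ) / ((β : ℚ) + 1) ^ f.natDegree) <
      1 + 2 * (C : ℚ) / ((β : ℚ) * ((β : ℚ) - 1)) := by
  have hinj : Function.Injective (Int.castRingHom ℚ) := RingHom.injective_int _
  have key := (f.map (Int.castRingHom ℚ)).eval_div_pow_div_eval_div_pow_mem_Ioo (C := C) (β := β)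
    (fun i => by rw [coeff_map, eq_intCast, ← Int.cast_abs]; exact_mod_cast hC i)
    (by
      rw [leadingCoeff_map_of_injective hinj, eq_intCast, ← Int.cast_abs]
      exact_mod_cast Int.one_le_abs (leadingCoeff_ne_zero.2 hf))
    (by exact_mod_cast hβ)
  rw [natDegree_map_eq_of_injective hinj, ← Int.cast_one, ← Int.cast_add, eval_intCast_map,
    eval_intCast_map] at key
  simpa using key
end

section
/- Fix integers D ≥ 0 and β₁ > 1, and integers β₂, …, β_n with β_{i} ≥ β_{i−1}^{D+1} for i = 2, …, n. Let m₁ = x₁^{k₁}⋯x_n^{k_n} and m₂ = x₁^{s₁}⋯x_n^{s_n} be monomials with all exponents at most D, and suppose m₁ > m₂ in the lexicographic order with x₁ ≺ x₂ ≺ ⋯ ≺ x_n. Then β₁^{k₁}⋯β_n^{k_n} > β₁^{s₁}⋯β_n^{s_n}, and moreover (β₁^{s₁}⋯β_n^{s_n})/(β₁^{k₁}⋯β_n^{k_n}) ≤ 1/β₁. -/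
/-!
Write `b_i` for the weights `β_{i+1}`. The chain condition `b_{i-1}^{D+1} ≤ b_i` telescopes to
`b₀ · ∏_{l<i} b_l^D ≤ b_i`: a single extra factor of `b_i` outweighs `b₀` times every monomial in the
smaller variables with exponents at most `D`. At the largest index `j` where the exponents differ,
`m₁` has at least one more factor of `b_j` than `m₂`, and the factors above `j` agree, so
`b₀ · m̂₂ ≤ m̂₁`. Both claims follow, since `b₀ > 1`.
-/

open Finset Fin.NatCast

namespace LexWeight

variable {R : Type*} [CommSemiring R] [LinearOrder R] [IsStrictOrderedRing R]
  {b : ℕ → R} {n D : ℕ}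

theorem one_lt (hb₀ : 1 < b 0) (hchain : ∀ i, i + 1 < n → b i ^ (D + 1) ≤ b (i + 1)) :
    ∀ i < n, 1 < b i
  | 0, _ => hb₀
  | i + 1, hi =>
    (one_lt_pow₀ (one_lt hb₀ hchain i (by omega)) (Nat.succ_ne_zero D)).trans_le (hchain i hi)

theorem mul_prod_pow_le (hb₀ : 1 < b 0) (hchain : ∀ i, i + 1 < n → b i ^ (D + 1) ≤ b (i + 1)) :
    ∀ i < n, b 0 * ∏ l ∈ range i, b l ^ D ≤ b i
  | 0, _ => by simp
  | i + 1, hi => by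
    calc b 0 * ∏ l ∈ range (i + 1), b l ^ D
        = (b 0 * ∏ l ∈ range i, b l ^ D) * b i ^ D := by rw [prod_range_succ, mul_assoc]
      _ ≤ b i * b i ^ D := by
        exact mul_le_mul_of_nonneg_right (mul_prod_pow_le hb₀ hchain i (by omega))
          (pow_nonneg (zero_le_one.trans (one_lt hb₀ hchain i (by omega)).le) D)
      _ = b i ^ (D + 1) := (pow_succ' _ _).symm
      _ ≤ b (i + 1) := hchain i hi

theorem prod_pow_pos (hb₀ : 1 < b 0) (hchain : ∀ i, i + 1 < n → b i ^ (D + 1) ≤ b (i + 1))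
    (e : ℕ → ℕ) : 0 < ∏ i ∈ range n, b i ^ e i :=
  prod_pos fun i hi => pow_pos (zero_lt_one.trans (one_lt hb₀ hchain i (mem_range.1 hi))) _

theorem mul_prod_pow_le_prod_pow (hb₀ : 1 < b 0)
    (hchain : ∀ i, i + 1 < n → b i ^ (D + 1) ≤ b (i + 1)) {k s : ℕ → ℕ}
    (hs : ∀ i < n, s i ≤ D) {j : ℕ} (hj : j < n) (hsk : s j < k j)
    (htail : ∀ i, j < i → i < n → k i = s i) :
    b 0 * ∏ i ∈ range n, b i ^ s i ≤ ∏ i ∈ range n, b i ^ k i := by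
  have hb : ∀ i < n, 1 ≤ b i := fun i hi => (one_lt hb₀ hchain i hi).le
  have hb0 : ∀ i < n, 0 ≤ b i := fun i hi => zero_le_one.trans (hb i hi)
  have hhead : b 0 * ∏ i ∈ range (j + 1), b i ^ s i ≤ ∏ i ∈ range (j + 1), b i ^ k i := by
    rw [prod_range_succ, prod_range_succ]
    calc b 0 * ((∏ i ∈ range j, b i ^ s i) * b j ^ s j)
        ≤ b 0 * ((∏ i ∈ range j, b i ^ D) * b j ^ s j) := by
          gcongr with i hi
          · exact pow_nonneg (hb0 j hj) _
          · exact fun i hi => pow_nonneg (hb0 i (by simp at hi; omega)) _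
          · exact hb i (by simp at hi; omega)
          · exact hs i (by simp at hi; omega)
      _ ≤ b j * b j ^ s j := by
          rw [← mul_assoc]
          exact mul_le_mul_of_nonneg_right (mul_prod_pow_le hb₀ hchain j hj)
            (pow_nonneg (hb0 j hj) _)
      _ = b j ^ (s j + 1) := (pow_succ' _ _).symm
      _ ≤ b j ^ k j := pow_le_pow_right₀ (hb j hj) hsk
      _ ≤ (∏ i ∈ range j, b i ^ k i) * b j ^ k j :=
          le_mul_of_one_le_left (pow_nonneg (hb0 j hj) _)
            (one_le_prod fun i hi => one_le_pow₀ (hb i (by simp at hi; omega)))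
  have htail' : ∏ i ∈ Ico (j + 1) n, b i ^ s i = ∏ i ∈ Ico (j + 1) n, b i ^ k i :=
    prod_congr rfl fun i hi => by
      rw [mem_Ico] at hi
      rw [htail i (by omega) hi.2]
  rw [← prod_range_mul_prod_Ico _ hj, ← prod_range_mul_prod_Ico _ hj, htail', ← mul_assoc]
  exact mul_le_mul_of_nonneg_right hhead
    (prod_nonneg fun i hi => pow_nonneg (hb0 i (by simp at hi; omega)) _)

end LexWeight

theorem stmt10_general (n D : ℕ) (hn : 0 < n) (β : Fin n → ℤ)
    (hβ1 : 1 < β ⟨0, hn⟩)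
    (hchain : ∀ i j : Fin n, (i : ℕ) + 1 = (j : ℕ) → β i ^ (D + 1) ≤ β j)
    (k s : Fin n → ℕ) (hs : ∀ i, s i ≤ D)
    (hlex : ∃ j : Fin n, s j < k j ∧ ∀ i, j < i → k i = s i) :
    (∏ i, β i ^ s i) < (∏ i, β i ^ k i) ∧
    (∏ i, (β i : ℚ) ^ s i) / (∏ i, (β i : ℚ) ^ k i) ≤ 1 / (β ⟨0, hn⟩ : ℚ) := by
  obtain ⟨j, hsk, htail⟩ := hlex
  have : NeZero n := ⟨hn.ne'⟩
  have hcast : ∀ {i : ℕ}, i < n → ((i : Fin n) : ℕ) = i := Fin.val_cast_of_lt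
  have hzero : (⟨0, hn⟩ : Fin n) = ((0 : ℕ) : Fin n) := Fin.ext (hcast hn).symm
  have hb₀ : 1 < β ((0 : ℕ) : Fin n) := hzero ▸ hβ1
  have hchain' : ∀ i, i + 1 < n → β i ^ (D + 1) ≤ β (i + 1 : ℕ) :=
    fun i hi => hchain _ _ (by rw [hcast (by omega), hcast hi])
  have hprod : ∀ e : Fin n → ℕ, ∏ i, β i ^ e i = ∏ m ∈ range n, β m ^ e m := fun e => by
    simpa using Fin.prod_univ_eq_prod_range (fun m => β m ^ e m) n
  have hpos : ∀ e : Fin n → ℕ, 0 < ∏ i, β i ^ e i :=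
    fun e => hprod e ▸ LexWeight.prod_pow_pos hb₀ hchain' _
  have hkey : β ⟨0, hn⟩ * ∏ i, β i ^ s i ≤ ∏ i, β i ^ k i := by
    rw [hprod, hprod, hzero]
    exact LexWeight.mul_prod_pow_le_prod_pow hb₀ hchain' (fun i _ => hs i) j.isLt
      (by simpa using hsk) fun i hji hi => htail _ (Fin.lt_def.2 (by rwa [hcast hi]))
  refine ⟨(lt_mul_of_one_lt_left (hpos s) hβ1).trans_le hkey, ?_⟩
  rw [div_le_div_iff₀ (by exact_mod_cast hpos k) (by exact_mod_cast zero_lt_one.trans hβ1),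
    one_mul, mul_comm]
  exact_mod_cast hkey

theorem stmt10 (n D : ℕ) (hn : 0 < n) (β : Fin n → ℤ)
    (hβ1 : 1 < β ⟨0, hn⟩)
    (hchain : ∀ i j : Fin n, (i : ℕ) + 1 = (j : ℕ) → β i ^ (D + 1) ≤ β j)
    (k s : Fin n → ℕ) (hk : ∀ i, k i ≤ D) (hs : ∀ i, s i ≤ D)
    (hlex : ∃ j : Fin n, s j < k j ∧ ∀ i, j < i → k i = s i) :
    (∏ i, β i ^ s i) < (∏ i, β i ^ k i) ∧
    (∏ i, (β i : ℚ) ^ s i) / (∏ i, (β i : ℚ) ^ k i) ≤ 1 / (β ⟨0, hn⟩ : ℚ) :=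
  stmt10_general n D hn β hβ1 hchain k s hs hlex
end

section
/- Let f = c₁m₁ + ⋯ + c_t m_t ∈ ℤ[x₁,…,x_n] with m₁ < ⋯ < m_t in lexicographic order, nonzero coefficients bounded in absolute value by C, total degree at most D, and m_t = x₁^{e₁}⋯x_n^{e_n}. Let β₁ ≥ 2C+1 and β_i ≥ β_{i−1}^{D+1} for i ≥ 2. Then for each j ∈ {1,…,n} and k ∈ ℕ: |f(β₁,…,β_n)| / (β_j^k · β_{j+1}^{e_{j+1}} ⋯ β_n^{e_n}) > 1/2 if k ≤ e_j, and < 1/2 if k > e_j. -/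
open Finset

set_option maxHeartbeats 1200000 in
theorem stmt11 (n t D : ℕ) (C : ℤ) (hn : 0 < n) (ht : 0 < t)
    (c : Fin t → ℤ) (m : Fin t → Fin n → ℕ)
    (hc0 : ∀ i, c i ≠ 0) (hcC : ∀ i, |c i| ≤ C)
    (hdeg : ∀ i, ∑ j, m i j ≤ D)
    (hlex : ∀ i i' : Fin t, i < i' →
      ∃ j : Fin n, m i j < m i' j ∧ ∀ j', j < j' → m i j' = m i' j')
    (β : Fin n → ℤ)
    (hβ1 : β ⟨0, hn⟩ ≥ 2 * C + 1)
    (hchain : ∀ i j : Fin n, (i : ℕ) + 1 = (j : ℕ) → β i ^ (D + 1) ≤ β j)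
    (e : Fin n → ℕ) (he : e = m ⟨t - 1, by omega⟩)
    (j : Fin n) (k : ℕ) :
    (k ≤ e j →
      (1 : ℚ) / 2 < |((∑ i, c i * ∏ j', β j' ^ m i j' : ℤ) : ℚ)| /
        ((β j : ℚ) ^ k * ∏ j' ∈ univ.filter (fun j' => j < j'), (β j' : ℚ) ^ e j')) ∧
    (k > e j →
      |((∑ i, c i * ∏ j', β j' ^ m i j' : ℤ) : ℚ)| /
        ((β j : ℚ) ^ k * ∏ j' ∈ univ.filter (fun j' => j < j'), (β j' : ℚ) ^ e j') <
        (1 : ℚ) / 2) := by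
  set z : Fin n := ⟨0, hn⟩ with hz
  have hC : 1 ≤ C := le_trans (Int.one_le_abs (hc0 ⟨0, ht⟩)) (hcC ⟨0, ht⟩)
  -- all β ≥ 3
  have hβ3' : ∀ v : ℕ, (h : v < n) → 3 ≤ β ⟨v, h⟩ := by
    intro v
    induction v with
    | zero => intro h; exact le_trans (by linarith) hβ1
    | succ v ih =>
      intro h
      have hv : v < n := by omega
      have hc := hchain ⟨v, hv⟩ ⟨v+1, h⟩ rfl
      have h3 := ih hv
      calc (3:ℤ) ≤ β ⟨v,hv⟩ := h3
        _ ≤ β ⟨v,hv⟩ ^ (D+1) := le_self_pow₀ (by linarith) (by omega)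
        _ ≤ _ := hc
  have hβ3 : ∀ i : Fin n, 3 ≤ β i := fun i => by
    have := hβ3' i.val i.isLt; simpa using this
  have hβpos : ∀ i : Fin n, 0 < β i := fun i => by linarith [hβ3 i]
  -- monotone
  have hmono' : ∀ d v : ℕ, (h : v + d < n) → β ⟨v, by omega⟩ ≤ β ⟨v + d, h⟩ := by
    intro d
    induction d with
    | zero => intro v h; rfl
    | succ d ih =>
      intro v h
      have h1 : v + d < n := by omega
      have h2 := hchain ⟨v + d, h1⟩ ⟨v + d + 1, by omega⟩ rfl
      calc β ⟨v, by omega⟩ ≤ β ⟨v + d, h1⟩ := ih v h1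
        _ ≤ β ⟨v + d, h1⟩ ^ (D+1) := le_self_pow₀ (by linarith [hβ3 ⟨v+d, h1⟩]) (by omega)
        _ ≤ β ⟨v + d + 1, by omega⟩ := h2
        _ = β ⟨v + (d + 1), h⟩ := by congr 1
  have hmono : ∀ i i' : Fin n, i ≤ i' → β i ≤ β i' := by
    intro i i' hii
    have h1 : i.val + (i'.val - i.val) < n := by omega
    have := hmono' (i'.val - i.val) i.val h1
    have he1 : (⟨i.val, by omega⟩ : Fin n) = i := by ext; simp
    have he2 : (⟨i.val + (i'.val - i.val), h1⟩ : Fin n) = i' := by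
      ext; simp; omega
    rwa [he1, he2] at this
  -- destructure t
  obtain ⟨t', rfl⟩ : ∃ t'', t = t'' + 1 := ⟨t - 1, by omega⟩
  have h' : t' < t' + 1 := by omega
  -- monomial values as ℕ-indexed family
  have hmin : ∀ a : ℕ, min a t' < t' + 1 := fun a => by omega
  obtain ⟨Mo, hMo⟩ : ∃ Mo : ℕ → ℤ, Mo = fun a => ∏ j', β j' ^ m ⟨min a t', hmin a⟩ j' := ⟨_, rfl⟩
  obtain ⟨co, hco⟩ : ∃ co : ℕ → ℤ, co = fun a => c ⟨min a t', hmin a⟩ := ⟨_, rfl⟩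
  have hMoeq : ∀ (a : ℕ) (h : a < t' + 1), Mo a = ∏ j', β j' ^ m ⟨a, h⟩ j' := by
    intro a h
    have hfin : (⟨min a t', hmin a⟩ : Fin (t'+1)) = ⟨a, h⟩ := Fin.mk_eq_mk.mpr (by omega)
    simp only [hMo]
    rw [hfin]
  have hcoeq : ∀ (a : ℕ) (h : a < t' + 1), co a = c ⟨a, h⟩ := by
    intro a h
    have hfin : (⟨min a t', hmin a⟩ : Fin (t'+1)) = ⟨a, h⟩ := Fin.mk_eq_mk.mpr (by omega)
    simp only [hco]
    rw [hfin]
  have hPpos : ∀ (g : Fin n → ℕ) (s : Finset (Fin n)), 1 ≤ ∏ j' ∈ s, β j' ^ g j' := by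
    intro g s
    calc (1:ℤ) = ∏ _j' ∈ s, (1:ℤ) := by simp
      _ ≤ ∏ j' ∈ s, β j' ^ g j' :=
        Finset.prod_le_prod (fun i _ => zero_le_one)
          (fun i _ => one_le_pow₀ (by linarith [hβ3 i]))
  have hPnn : ∀ (g : Fin n → ℕ) (s : Finset (Fin n)), (0:ℤ) ≤ ∏ j' ∈ s, β j' ^ g j' :=
    fun g s => by linarith [hPpos g s]
  have hcoC : ∀ a : ℕ, |co a| ≤ C := by
    intro a
    simp only [hco]
    exact hcC _
  have hMopos : ∀ a : ℕ, 1 ≤ Mo a := by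
    intro a
    rw [hMo]
    exact hPpos _ _
  -- split of products at j
  have hsplit : ∀ (g : Fin n → ℕ) (j : Fin n),
      ∏ j', β j' ^ g j' =
        (∏ j' ∈ univ.filter (fun j' => j' < j), β j' ^ g j') * β j ^ g j *
        ∏ j' ∈ univ.filter (fun j' => j < j'), β j' ^ g j' := by
    intro g j
    rw [← Finset.prod_filter_mul_prod_filter_not univ (fun j' => j < j')]
    have h1 : univ.filter (fun j' => ¬ j < j') = insert j (univ.filter (fun j' => j' < j)) := by
      ext x
      simp only [mem_filter, mem_univ, true_and, mem_insert, Fin.lt_def, Fin.ext_iff]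
      omega
    rw [h1, Finset.prod_insert (by simp)]
    ring
  -- key bound on lower part
  have hE : ∀ (g : Fin n → ℕ) (j : Fin n), (∑ j', g j' ≤ D) →
      β z * ∏ j' ∈ univ.filter (fun j' => j' < j), β j' ^ g j' ≤ β j := by
    intro g j hg
    by_cases h0 : j.val = 0
    · have hempty : univ.filter (fun j' => j' < j) = (∅ : Finset (Fin n)) := by
        ext x; simp only [mem_filter, mem_univ, true_and, Fin.lt_def, notMem_empty,
          iff_false]; omega
      rw [hempty, Finset.prod_empty, mul_one]
      exact hmono z j (by rw [Fin.le_def]; exact Nat.zero_le _)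
    · set p : Fin n := ⟨j.val - 1, by omega⟩ with hp
      have hsum : ∑ j' ∈ univ.filter (fun j' => j' < j), g j' ≤ D :=
        le_trans (Finset.sum_le_sum_of_subset (Finset.filter_subset _ _)) hg
      calc β z * ∏ j' ∈ univ.filter (fun j' => j' < j), β j' ^ g j'
          ≤ β p * ∏ j' ∈ univ.filter (fun j' => j' < j), β p ^ g j' := by
            refine mul_le_mul (hmono z p (by rw [Fin.le_def]; exact Nat.zero_le _)) ?_ ?_ ?_
            · refine Finset.prod_le_prod
                (fun j' _ => pow_nonneg (by linarith [hβ3 j']) _) ?_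
              intro j' hj'
              simp only [mem_filter, mem_univ, true_and, Fin.lt_def] at hj'
              refine pow_le_pow_left₀ (by linarith [hβ3 j']) (hmono j' p ?_) _
              rw [Fin.le_def, hp]
              exact (by omega : j'.val ≤ j.val - 1)
            · exact hPnn g _
            · linarith [hβ3 p]
        _ = β p ^ (∑ j' ∈ univ.filter (fun j' => j' < j), g j' + 1) := by
            rw [Finset.prod_pow_eq_pow_sum]; ring
        _ ≤ β p ^ (D + 1) := pow_le_pow_right₀ (by linarith [hβ3 p]) (by omega)
        _ ≤ β j := hchain p j (by rw [hp]; exact (by omega : j.val - 1 + 1 = j.val))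
  -- consecutive monomials
  have hcons : ∀ a : ℕ, a + 1 < t' + 1 → β z * Mo a ≤ Mo (a + 1) := by
    intro a h
    have ha : a < t' + 1 := by omega
    obtain ⟨J, hJ1, hJ2⟩ := hlex ⟨a, ha⟩ ⟨a+1, h⟩ (Fin.mk_lt_mk.mpr (by omega))
    rw [hMoeq a ha, hMoeq (a+1) h, hsplit (m ⟨a, ha⟩) J, hsplit (m ⟨a+1, h⟩) J]
    have hT : (∏ j' ∈ univ.filter (fun j' => J < j'), β j' ^ m ⟨a, ha⟩ j')
        = ∏ j' ∈ univ.filter (fun j' => J < j'), β j' ^ m ⟨a+1, h⟩ j' :=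
      Finset.prod_congr rfl (fun x hx => by
        rw [hJ2 x (by simpa using hx)])
    rw [hT]
    have key : β z * ((∏ j' ∈ univ.filter (fun j' => j' < J), β j' ^ m ⟨a, ha⟩ j') * β J ^ m ⟨a, ha⟩ J)
        ≤ (∏ j' ∈ univ.filter (fun j' => j' < J), β j' ^ m ⟨a+1, h⟩ j') * β J ^ m ⟨a+1, h⟩ J := by
      calc β z * ((∏ j' ∈ univ.filter (fun j' => j' < J), β j' ^ m ⟨a, ha⟩ j') * β J ^ m ⟨a, ha⟩ J)
          = (β z * ∏ j' ∈ univ.filter (fun j' => j' < J), β j' ^ m ⟨a, ha⟩ j') * β J ^ m ⟨a, ha⟩ J := by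
            ring
        _ ≤ β J * β J ^ m ⟨a, ha⟩ J :=
            mul_le_mul_of_nonneg_right (hE (m ⟨a, ha⟩) J (hdeg _))
              (pow_nonneg (by linarith [hβ3 J]) _)
        _ = β J ^ (m ⟨a, ha⟩ J + 1) := by ring
        _ ≤ β J ^ m ⟨a+1, h⟩ J := pow_le_pow_right₀ (by linarith [hβ3 J]) (by omega)
        _ ≤ (∏ j' ∈ univ.filter (fun j' => j' < J), β j' ^ m ⟨a+1, h⟩ j') * β J ^ m ⟨a+1, h⟩ J :=
            le_mul_of_one_le_left (pow_nonneg (by linarith [hβ3 J]) _) (hPpos _ _)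
    calc β z * ((∏ j' ∈ univ.filter (fun j' => j' < J), β j' ^ m ⟨a, ha⟩ j') * β J ^ m ⟨a, ha⟩ J *
          ∏ j' ∈ univ.filter (fun j' => J < j'), β j' ^ m ⟨a+1, h⟩ j')
        = (β z * ((∏ j' ∈ univ.filter (fun j' => j' < J), β j' ^ m ⟨a, ha⟩ j') * β J ^ m ⟨a, ha⟩ J)) *
          ∏ j' ∈ univ.filter (fun j' => J < j'), β j' ^ m ⟨a+1, h⟩ j' := by ring
      _ ≤ ((∏ j' ∈ univ.filter (fun j' => j' < J), β j' ^ m ⟨a+1, h⟩ j') * β J ^ m ⟨a+1, h⟩ J) *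
          ∏ j' ∈ univ.filter (fun j' => J < j'), β j' ^ m ⟨a+1, h⟩ j' :=
          mul_le_mul_of_nonneg_right key (hPnn _ _)
  -- geometric bound
  have hgeo : ∀ s : ℕ, s < t' + 1 → (β z - 1) * (∑ i ∈ range s, Mo i) ≤ Mo s - 1 := by
    intro s
    induction s with
    | zero => intro _; simp; linarith [hMopos 0]
    | succ s ih =>
      intro h
      rw [Finset.sum_range_succ, mul_add]
      have h1 := ih (by omega)
      have h2 := hcons s h
      have h3 := hMopos s
      nlinarith
  obtain ⟨S, hS⟩ : ∃ S : ℤ, S = ∑ i ∈ range t', Mo i := ⟨_, rfl⟩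
  obtain ⟨Mhat, hMhat⟩ : ∃ M : ℤ, M = Mo t' := ⟨_, rfl⟩
  have hSbound : (β z - 1) * S ≤ Mhat - 1 := by rw [hS, hMhat]; exact hgeo t' (by omega)
  have hSnn : 0 ≤ S := by
    rw [hS]; exact Finset.sum_nonneg (fun i _ => by linarith [hMopos i])
  have hM1 : 1 ≤ Mhat := by rw [hMhat]; exact hMopos t'
  have h2CS : 2 * C * S ≤ Mhat - 1 := by
    nlinarith [mul_nonneg (show (0:ℤ) ≤ β z - 1 - 2*C by linarith) hSnn]
  -- rewrite F
  obtain ⟨F, hFdef⟩ : ∃ F : ℤ, F = ∑ i, c i * ∏ j', β j' ^ m i j' := ⟨_, rfl⟩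
  have hFsum : F = ∑ a ∈ range (t'+1), co a * Mo a := by
    rw [hFdef, ← Fin.sum_univ_eq_sum_range (fun a => co a * Mo a) (t'+1)]
    refine Finset.sum_congr rfl (fun i _ => ?_)
    rw [hcoeq i.val i.isLt, hMoeq i.val i.isLt]
  have habsS : |∑ a ∈ range t', co a * Mo a| ≤ C * S := by
    calc |∑ a ∈ range t', co a * Mo a| ≤ ∑ a ∈ range t', |co a * Mo a| :=
        Finset.abs_sum_le_sum_abs _ _
      _ ≤ ∑ a ∈ range t', C * Mo a := by
          refine Finset.sum_le_sum (fun a _ => ?_)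
          rw [abs_mul, abs_of_pos (show (0:ℤ) < Mo a by linarith [hMopos a])]
          exact mul_le_mul_of_nonneg_right (hcoC a) (by linarith [hMopos a])
      _ = C * S := by rw [hS, Finset.mul_sum]
  have hlastabs : 1 ≤ |co t'| := Int.one_le_abs (by rw [hcoeq t' h']; exact hc0 _)
  have hFlow : Mhat - C * S ≤ |F| := by
    rw [hFsum, Finset.sum_range_succ]
    have key : |co t' * Mo t'| - |∑ a ∈ range t', co a * Mo a| ≤
        |(∑ a ∈ range t', co a * Mo a) + co t' * Mo t'| := by
      have h := abs_add_le ((∑ a ∈ range t', co a * Mo a) + co t' * Mo t')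
        (-(∑ a ∈ range t', co a * Mo a))
      rw [abs_neg] at h
      have h2 : ((∑ a ∈ range t', co a * Mo a) + co t' * Mo t') +
          -(∑ a ∈ range t', co a * Mo a) = co t' * Mo t' := by ring
      rw [h2] at h
      linarith
    have h3 : Mhat ≤ |co t' * Mo t'| := by
      rw [abs_mul, abs_of_pos (show (0:ℤ) < Mo t' by linarith [hMopos t'])]
      calc Mhat = 1 * Mo t' := by rw [hMhat, one_mul]
        _ ≤ |co t'| * Mo t' :=
            mul_le_mul_of_nonneg_right hlastabs (by linarith [hMopos t'])
    linarith
  have hFup : |F| ≤ C * (S + Mhat) := by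
    rw [hFsum]
    calc |∑ a ∈ range (t'+1), co a * Mo a| ≤ ∑ a ∈ range (t'+1), |co a * Mo a| :=
        Finset.abs_sum_le_sum_abs _ _
      _ ≤ ∑ a ∈ range (t'+1), C * Mo a := by
          refine Finset.sum_le_sum (fun a _ => ?_)
          rw [abs_mul, abs_of_pos (show (0:ℤ) < Mo a by linarith [hMopos a])]
          exact mul_le_mul_of_nonneg_right (hcoC a) (by linarith [hMopos a])
      _ = C * (S + Mhat) := by
          rw [Finset.sum_range_succ, ← Finset.mul_sum, hS, hMhat, mul_add]
  -- decompose Mhat at j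
  have he' : e = m ⟨t', h'⟩ := he.trans (congrArg m (Fin.mk_eq_mk.mpr (by omega)))
  have hesum : ∑ j', e j' ≤ D := by rw [he']; exact hdeg _
  obtain ⟨P, hP⟩ : ∃ P : ℤ, P = ∏ j' ∈ univ.filter (fun j' => j' < j), β j' ^ e j' := ⟨_, rfl⟩
  obtain ⟨T, hT⟩ : ∃ T : ℤ, T = ∏ j' ∈ univ.filter (fun j' => j < j'), β j' ^ e j' := ⟨_, rfl⟩
  have hMhatsplit : Mhat = P * β j ^ e j * T := by
    rw [hMhat, hMoeq t' h', ← he', hP, hT]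
    exact hsplit e j
  have hPone : 1 ≤ P := by rw [hP]; exact hPpos e _
  have hTone : 1 ≤ T := by rw [hT]; exact hPpos e _
  have hTnn : (0:ℤ) ≤ T := by linarith
  have hβzP : β z * P ≤ β j := by rw [hP]; exact hE e j hesum
  obtain ⟨Qz, hQz⟩ : ∃ Q : ℤ, Q = β j ^ k * T := ⟨_, rfl⟩
  have hQzpos : 0 < Qz := by
    rw [hQz]
    exact mul_pos (pow_pos (hβpos j) k) (by linarith)
  -- cast equalities
  have hcastQ : ((β j : ℚ) ^ k * ∏ j' ∈ univ.filter (fun j' => j < j'), (β j' : ℚ) ^ e j')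
      = ((Qz : ℤ) : ℚ) := by
    rw [hQz, hT]
    push_cast
    ring
  have hcastF : |((F : ℤ) : ℚ)| = ((|F| : ℤ) : ℚ) := by
    push_cast
    ring
  rw [← hFdef, hcastQ, hcastF]
  have hQQ : (0:ℚ) < ((Qz : ℤ) : ℚ) := by exact_mod_cast hQzpos
  constructor
  · intro hk
    have hZ : Qz < 2 * |F| := by
      have h1 : Qz ≤ Mhat := by
        rw [hQz, hMhatsplit]
        have h0 : (0:ℤ) ≤ β j ^ e j * T :=
          mul_nonneg (pow_nonneg (by linarith [hβ3 j]) _) hTnn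
        calc β j ^ k * T ≤ β j ^ e j * T :=
            mul_le_mul_of_nonneg_right (pow_le_pow_right₀ (by linarith [hβ3 j]) hk) hTnn
          _ ≤ P * β j ^ e j * T := by nlinarith
      linarith
    rw [lt_div_iff₀ hQQ]
    have hcast2 : ((Qz : ℤ) : ℚ) < 2 * ((|F| : ℤ) : ℚ) := by exact_mod_cast hZ
    linarith
  · intro hk
    have hZ : 2 * |F| < Qz := by
      have h1 : β j ^ (e j + 1) * T ≤ Qz := by
        rw [hQz]
        exact mul_le_mul_of_nonneg_right
          (pow_le_pow_right₀ (by linarith [hβ3 j]) (by omega)) hTnn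
      have h2 : β z * Mhat ≤ β j ^ (e j + 1) * T := by
        rw [hMhatsplit]
        calc β z * (P * β j ^ e j * T) = (β z * P) * (β j ^ e j * T) := by ring
          _ ≤ β j * (β j ^ e j * T) :=
              mul_le_mul_of_nonneg_right hβzP
                (mul_nonneg (pow_nonneg (by linarith [hβ3 j]) _) hTnn)
          _ = β j ^ (e j + 1) * T := by ring
      have h3 : 2 * |F| ≤ 2 * C * (S + Mhat) := by linarith
      have h4 : 2 * C * (S + Mhat) < β z * Mhat := by
        nlinarith [mul_nonneg (show (0:ℤ) ≤ β z - (2*C+1) by linarith)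
          (show (0:ℤ) ≤ Mhat by linarith)]
      linarith
    rw [div_lt_iff₀ hQQ]
    have hcast2 : 2 * ((|F| : ℤ) : ℚ) < ((Qz : ℤ) : ℚ) := by exact_mod_cast hZ
    linarith
end

section
/- Let f, g ∈ ℤ[x₁,…,x_n] with gcd(f,g) = 1. Then for any positive integers k₁,…,k_n, gcd(f(x₁^{k₁},…,x_n^{k_n}), g(x₁^{k₁},…,x_n^{k_n})) = 1. -/
/-!
Fix a variable `xᵢ` and view `f`, `g` as polynomials in `xᵢ` over the ring of polynomials in the
other variables. Relatively prime there, they are coprime over its fraction field (Gauss's lemma),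
so their resultant is a nonzero polynomial free of `xᵢ` in the ideal `(f, g)`. The substitution
`xⱼ ↦ xⱼ ^ kⱼ` is injective and keeps it free of `xᵢ`, so a common divisor `d` of the substituted
polynomials divides a nonzero polynomial free of `xᵢ` and is therefore free of `xᵢ` as well.
Hence `d` is a constant `C r`; as the substitution sends the coefficient of `xᵉ` to that of
`x^(k • e)`, `r` divides every coefficient of `f` and `g`, so it is a unit.
-/

open scoped nonZeroDivisors Polynomial

namespace Polynomial

variable {R : Type*} [CommRing R] [IsDomain R] [IsGCDMonoid R]

theorem isCoprime_map_of_isRelPrime {K : Type*} [Field K] [Algebra R K] [IsFractionRing R K]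
    {F G : R[X]} (h : IsRelPrime F G) :
    IsCoprime (F.map (algebraMap R K)) (G.map (algebraMap R K)) := by
  let : NormalizedGCDMonoid R := Nonempty.some inferInstance
  have hinj := IsFractionRing.injective R K
  rw [← isRelPrime_iff_isCoprime]
  intro d hdF hdG
  have hd0 : d ≠ 0 := by
    rintro rfl
    rw [zero_dvd_iff, Polynomial.map_eq_zero_iff hinj] at hdF hdG
    exact h.ne_zero_or_ne_zero.elim (· hdF) (· hdG)
  -- Up to a unit of `K[X]`, `d` is the image of a primitive polynomial `p`, and Gauss's lemma
  -- pulls the divisibilities `d ∣ F`, `d ∣ G` back to `R[X]`.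
  set p := (IsLocalization.integerNormalization R⁰ d).primPart
  have hpd : p.map (algebraMap R K) ∣ d := by
    obtain ⟨b, hb, hbd⟩ := IsLocalization.integerNormalization_spec R⁰ d
    have hpb : p.map (algebraMap R K) ∣ C (algebraMap R K b) * d := by
      rw [← smul_eq_C_mul, algebraMap_smul, ← hbd]
      exact Polynomial.map_dvd _ (primPart_dvd _)
    refine (IsUnit.dvd_mul_left ?_).mp hpb
    exact isUnit_C.mpr ((map_ne_zero_iff _ hinj).mpr (nonZeroDivisors.ne_zero hb)).isUnit
  have hp := isPrimitive_primPart (IsLocalization.integerNormalization R⁰ d)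
  exact isUnit_or_eq_zero_of_isUnit_integerNormalization_primPart hd0 <|
    h (hp.dvd_of_fraction_map_dvd_fraction_map (hpd.trans hdF))
      (hp.dvd_of_fraction_map_dvd_fraction_map (hpd.trans hdG))

theorem exists_mul_add_mul_eq_C_of_isRelPrime {F G : R[X]} (h : IsRelPrime F G) :
    ∃ a b : R[X], ∃ c : R, c ≠ 0 ∧ F * a + G * b = C c := by
  by_cases hdeg : F.natDegree ≠ 0 ∨ G.natDegree ≠ 0
  · obtain ⟨a, b, -, -, hab⟩ := exists_mul_add_mul_eq_C_resultant F G le_rfl le_rfl hdeg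
    refine ⟨a, b, _, ?_, hab⟩
    have hinj := IsFractionRing.injective R (FractionRing R)
    have hres := resultant_ne_zero _ _ (isCoprime_map_of_isRelPrime (K := FractionRing R) h)
    rwa [natDegree_map_eq_of_injective hinj, natDegree_map_eq_of_injective hinj,
      resultant_map_map, map_ne_zero_iff _ hinj] at hres
  · rw [not_or, not_not, not_not] at hdeg
    rw [eq_C_of_natDegree_eq_zero hdeg.1, eq_C_of_natDegree_eq_zero hdeg.2] at h ⊢
    rcases h.ne_zero_or_ne_zero with hF | hG
    · exact ⟨1, 0, _, C_ne_zero.mp hF, by ring⟩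
    · exact ⟨0, 1, _, C_ne_zero.mp hG, by ring⟩

end Polynomial

namespace MvPolynomial

section ScaleExponents

variable {σ R : Type*} [CommSemiring R]

noncomputable def scaleExponents (k : σ → ℕ) : (σ →₀ ℕ) →+ (σ →₀ ℕ) :=
  Finsupp.liftAddHom fun i => (Finsupp.singleAddHom i).comp (AddMonoidHom.mulLeft (k i))

theorem scaleExponents_apply (k : σ → ℕ) (e : σ →₀ ℕ) (i : σ) :
    scaleExponents k e i = k i * e i := by
  classical
  induction e using Finsupp.induction_linear with
  | zero => simp
  | add e₁ e₂ h₁ h₂ => simp [h₁, h₂, mul_add]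
  | single j m => by_cases h : j = i <;> simp [scaleExponents, h]

theorem scaleExponents_injective {k : σ → ℕ} (hk : ∀ i, k i ≠ 0) :
    Function.Injective (scaleExponents k) := fun e₁ e₂ h =>
  Finsupp.ext fun i => Nat.eq_of_mul_eq_mul_left (Nat.pos_of_ne_zero (hk i)) <| by
    simpa only [scaleExponents_apply] using DFunLike.congr_fun h i

theorem bind₁_X_pow_monomial (k : σ → ℕ) (d : σ →₀ ℕ) (r : R) :
    bind₁ (fun i => (X i : MvPolynomial σ R) ^ k i) (monomial d r) =
      monomial (scaleExponents k d) r := by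
  rw [bind₁_monomial, monomial_eq, scaleExponents, Finsupp.liftAddHom_apply,
    Finsupp.prod_sum_index (fun _ => pow_zero _) (fun _ _ _ => pow_add _ _ _)]
  simp only [AddMonoidHom.coe_comp, Function.comp_apply, Finsupp.singleAddHom_apply,
    AddMonoidHom.coe_mulLeft, Finsupp.prod_single_index, pow_zero, pow_mul]
  rfl

theorem coeff_scaleExponents_bind₁_X_pow {k : σ → ℕ} (hk : ∀ i, k i ≠ 0)
    (p : MvPolynomial σ R) (d : σ →₀ ℕ) :
    coeff (scaleExponents k d) (bind₁ (fun i => (X i : MvPolynomial σ R) ^ k i) p) =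
      coeff d p := by
  classical
  induction p using MvPolynomial.induction_on' with
  | monomial u r =>
    rw [bind₁_X_pow_monomial, coeff_monomial, coeff_monomial]
    simp only [(scaleExponents_injective hk).eq_iff]
  | add => simp only [*, map_add, coeff_add]

theorem bind₁_X_pow_injective {k : σ → ℕ} (hk : ∀ i, k i ≠ 0) :
    Function.Injective (bind₁ fun i => (X i : MvPolynomial σ R) ^ k i) := fun p q h =>
  ext p q fun d => by
    rw [← coeff_scaleExponents_bind₁_X_pow hk, h, coeff_scaleExponents_bind₁_X_pow hk]

theorem C_dvd_of_C_dvd_bind₁_X_pow {k : σ → ℕ} (hk : ∀ i, k i ≠ 0) {r : R}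
    {p : MvPolynomial σ R} (h : C r ∣ bind₁ (fun i => (X i : MvPolynomial σ R) ^ k i) p) :
    C r ∣ p := by
  rw [C_dvd_iff_dvd_coeff] at h ⊢
  exact fun d => coeff_scaleExponents_bind₁_X_pow hk p d ▸ h _

theorem notMem_vars_bind₁_X_pow (k : σ → ℕ) {p : MvPolynomial σ R} {i : σ} (hi : i ∉ p.vars) :
    i ∉ (bind₁ (fun j => (X j : MvPolynomial σ R) ^ k j) p).vars := by
  classical
  intro h
  obtain ⟨j, hj, hij⟩ := Finset.mem_biUnion.mp (vars_bind₁ _ p h)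
  replace hij := vars_pow _ _ hij
  rw [vars_def, Multiset.mem_toFinset] at hij
  obtain rfl := Multiset.mem_singleton.mp (Multiset.mem_of_le (degrees_X' j) hij)
  exact hi hj

end ScaleExponents

section Domain

variable {σ R : Type*} [CommRing R] [IsDomain R]

theorem notMem_vars_of_dvd {d q : MvPolynomial σ R} {i : σ} (hdq : d ∣ q) (hq : q ≠ 0)
    (hi : i ∉ q.vars) : i ∉ d.vars := by
  obtain ⟨e, rfl⟩ := hdq
  rw [mem_vars_iff_degreeOf_ne_zero, not_not] at hi ⊢
  rw [degreeOf_mul_eq (left_ne_zero_of_mul hq) (right_ne_zero_of_mul hq)] at hi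
  omega

end Domain

section PolynomialSubtypeNe

variable {σ : Type*} (R : Type*) [CommSemiring R] [DecidableEq σ]

noncomputable def polynomialSubtypeNeEquiv (i : σ) :
    MvPolynomial σ R ≃ₐ[R] Polynomial (MvPolynomial {j // j ≠ i} R) :=
  (renameEquiv R (Equiv.optionSubtypeNe i).symm).trans (optionEquivLeft R {j // j ≠ i})

variable {R}

theorem degreeOf_eq_natDegree_polynomialSubtypeNeEquiv (i : σ) (p : MvPolynomial σ R) :
    degreeOf i p = (polynomialSubtypeNeEquiv R i p).natDegree :=
  degreeOf_eq_natDegree i p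

end PolynomialSubtypeNe

theorem exists_mem_span_pair_ne_zero_notMem_vars {σ R : Type*} [CommRing R] [IsDomain R]
    [UniqueFactorizationMonoid R] [DecidableEq σ] {f g : MvPolynomial σ R} (h : IsRelPrime f g)
    (i : σ) : ∃ c ∈ Ideal.span {f, g}, c ≠ 0 ∧ i ∉ c.vars := by
  set e := polynomialSubtypeNeEquiv R i
  have he : IsRelPrime (e f) (e g) := IsRelPrime.of_map e.symm (by simpa using h)
  obtain ⟨a, b, c, hc, habc⟩ := Polynomial.exists_mul_add_mul_eq_C_of_isRelPrime he
  refine ⟨e.symm (Polynomial.C c), Ideal.mem_span_pair.mpr ⟨e.symm a, e.symm b, ?_⟩, ?_, ?_⟩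
  · apply e.injective
    simp [← habc, mul_comm]
  · simpa using hc
  · rw [mem_vars_iff_degreeOf_ne_zero, degreeOf_eq_natDegree_polynomialSubtypeNeEquiv,
      AlgEquiv.apply_symm_apply, Polynomial.natDegree_C, not_not]

end MvPolynomial

open MvPolynomial

theorem stmt13 (n : ℕ) (f g : MvPolynomial (Fin n) ℤ)
    (hcop : IsRelPrime f g) (k : Fin n → ℕ) (hk : ∀ i, 0 < k i) :
    IsRelPrime ((bind₁ fun i => (X i : MvPolynomial (Fin n) ℤ) ^ k i) f)
      ((bind₁ fun i => (X i : MvPolynomial (Fin n) ℤ) ^ k i) g) := by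
  have hk₀ : ∀ i, k i ≠ 0 := fun i => (hk i).ne'
  intro d hdf hdg
  have hfree : ∀ i, i ∉ d.vars := by
    intro i
    obtain ⟨c, hc, hc₀, hic⟩ := exists_mem_span_pair_ne_zero_notMem_vars hcop i
    obtain ⟨a, b, rfl⟩ := Ideal.mem_span_pair.mp hc
    refine notMem_vars_of_dvd ?_ ((map_ne_zero_iff _ (bind₁_X_pow_injective hk₀)).mpr hc₀)
      (notMem_vars_bind₁_X_pow k hic)
    rw [map_add, map_mul, map_mul]
    exact dvd_add (dvd_mul_of_dvd_right hdf _) (dvd_mul_of_dvd_right hdg _)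
  obtain ⟨r, rfl⟩ : ∃ r, d = C r :=
    ⟨_, vars_eq_empty_iff_eq_C.mp (Finset.eq_empty_of_forall_notMem hfree)⟩
  exact hcop (C_dvd_of_C_dvd_bind₁_X_pow hk₀ hdf) (C_dvd_of_C_dvd_bind₁_X_pow hk₀ hdg)
end

section
/- Let f, g ∈ ℤ[x₁,…,x_n] with gcd(f,g) = 1, and let x be a new variable. Then gcd(f(x₁+x, x₂+x, …, x_n+x), g(x₁+x, …, x_n+x)) = 1 in ℤ[x, x₁,…,x_n]. -/
open MvPolynomial

private lemma relprime_C_aux {R : Type*} [CommRing R] [IsDomain R] {a b : R}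
    (h : IsRelPrime a b) (hab : a ≠ 0 ∨ b ≠ 0) :
    IsRelPrime (Polynomial.C a) (Polynomial.C b) := by
  intro d hda hdb
  have hdeg : d.natDegree = 0 := by
    rcases hab with ha | hb
    · have := Polynomial.natDegree_le_of_dvd hda (Polynomial.C_ne_zero.mpr ha)
      simpa using this
    · have := Polynomial.natDegree_le_of_dvd hdb (Polynomial.C_ne_zero.mpr hb)
      simpa using this
  have hd : d = Polynomial.C (d.coeff 0) := Polynomial.eq_C_of_natDegree_eq_zero hdeg
  set c := d.coeff 0
  rw [hd] at hda hdb ⊢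
  have hca : c ∣ a := by
    have := (Polynomial.C_dvd_iff_dvd_coeff c (Polynomial.C a)).mp hda 0
    simpa using this
  have hcb : c ∣ b := by
    have := (Polynomial.C_dvd_iff_dvd_coeff c (Polynomial.C b)).mp hdb 0
    simpa using this
  exact Polynomial.isUnit_C.mpr (h hca hcb)

/-- In `MvPolynomial (Fin (n+1)) ℤ`, the variable `X 0` plays the role of the new
variable `x`, and `X i.succ` plays the role of `xᵢ`. -/
theorem stmt14 (n : ℕ) (f g : MvPolynomial (Fin n) ℤ)
    (hcop : IsRelPrime f g) :
    IsRelPrime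
      ((aeval fun i : Fin n => (X i.succ + X 0 : MvPolynomial (Fin (n + 1)) ℤ)) f)
      ((aeval fun i : Fin n => (X i.succ + X 0 : MvPolynomial (Fin (n + 1)) ℤ)) g) := by
  have hab : f ≠ 0 ∨ g ≠ 0 := by
    by_contra h
    push_neg at h
    have h0f : (0 : MvPolynomial (Fin n) ℤ) ∣ f := by rw [h.1]
    have h0g : (0 : MvPolynomial (Fin n) ℤ) ∣ g := by rw [h.2]
    exact not_isUnit_zero (hcop h0f h0g)
  -- the shift automorphism and its inverse
  set σ : MvPolynomial (Fin (n+1)) ℤ →ₐ[ℤ] MvPolynomial (Fin (n+1)) ℤ :=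
    aeval (Fin.cases (X 0) (fun i : Fin n => X i.succ + X 0)) with hσ
  set τ : MvPolynomial (Fin (n+1)) ℤ →ₐ[ℤ] MvPolynomial (Fin (n+1)) ℤ :=
    aeval (Fin.cases (X 0) (fun i : Fin n => X i.succ - X 0)) with hτ
  have hστ : ∀ p, σ (τ p) = p := by
    have : σ.comp τ = AlgHom.id ℤ _ := by
      apply MvPolynomial.algHom_ext
      intro j
      refine Fin.cases ?_ (fun i => ?_) j <;> simp [hσ, hτ]
    intro p
    calc σ (τ p) = (σ.comp τ) p := rfl
    _ = p := by rw [this]; rfl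
  have hτF : ∀ p : MvPolynomial (Fin n) ℤ,
      τ ((aeval fun i : Fin n => (X i.succ + X 0 : MvPolynomial (Fin (n + 1)) ℤ)) p)
        = rename Fin.succ p := by
    have : τ.comp (aeval fun i : Fin n => (X i.succ + X 0 : MvPolynomial (Fin (n + 1)) ℤ))
        = (rename Fin.succ : MvPolynomial (Fin n) ℤ →ₐ[ℤ] _) := by
      apply MvPolynomial.algHom_ext
      intro i
      simp [hτ]
    intro p
    calc τ _ = (τ.comp (aeval fun i : Fin n => (X i.succ + X 0 :
        MvPolynomial (Fin (n + 1)) ℤ))) p := rfl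
    _ = rename Fin.succ p := by rw [this]
  -- key: renamed polynomials are relatively prime
  have key : IsRelPrime (rename Fin.succ f) (rename Fin.succ g) := by
    set e := MvPolynomial.finSuccEquiv ℤ n with he
    have heC : ∀ p : MvPolynomial (Fin n) ℤ, e (rename Fin.succ p) = Polynomial.C p := by
      have : (e.toAlgHom.comp (rename Fin.succ : MvPolynomial (Fin n) ℤ →ₐ[ℤ] _))
          = Polynomial.CAlgHom := by
        apply MvPolynomial.algHom_ext
        intro i
        simp [he, Polynomial.CAlgHom, MvPolynomial.finSuccEquiv_X_succ]
      intro p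
      calc e (rename Fin.succ p)
          = (e.toAlgHom.comp (rename Fin.succ : MvPolynomial (Fin n) ℤ →ₐ[ℤ] _)) p := rfl
      _ = Polynomial.C p := by rw [this]; rfl
    intro d hdf hdg
    have h1 : e d ∣ Polynomial.C f := by
      rw [← heC]; exact map_dvd e hdf
    have h2 : e d ∣ Polynomial.C g := by
      rw [← heC]; exact map_dvd e hdg
    have hu : IsUnit (e d) := relprime_C_aux hcop hab h1 h2
    have := hu.map e.symm
    simpa using this
  intro d hd1 hd2
  have h1 : τ d ∣ rename Fin.succ f := by
    rw [← hτF]; exact map_dvd τ hd1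
  have h2 : τ d ∣ rename Fin.succ g := by
    rw [← hτF]; exact map_dvd τ hd2
  have hu : IsUnit (τ d) := key h1 h2
  have := hu.map σ
  rwa [hστ] at this
end

section
/- Let f, g ∈ ℤ[x₁,…,x_n] with gcd(f,g) = 1 and max(deg f, deg g) ≤ D. Let x, c₁, …, c_n be new variables. Then gcd( f((x+c₁), (x+c₂)^{D+1}, …, (x+c_n)^{(D+1)^{n−1}}), g((x+c₁), (x+c₂)^{D+1}, …, (x+c_n)^{(D+1)^{n−1}}) ) = 1 in ℤ[x, c₁, …, c_n]. -/
open MvPolynomial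

/-!
Substituting `xᵢ ↦ xᵢ ^ eᵢ` (all `eᵢ > 0`) preserves coprimality over a UFD. One variable at a
time this is `Polynomial.expand` over `A = R[other variables]`: by Gauss's lemma coprime
polynomials over `A` stay coprime over `Frac A`, where expansion visibly preserves Bézout
identities, so a common divisor of the expansions is a constant of `A`; such a constant divides
every coefficient of `f` and `g`, hence is a unit. The variables are then renamed to `cᵢ`, which
is harmless since `A → A[x]` preserves coprimality, and the automorphism `cᵢ ↦ x + cᵢ` finishes.
-/

theorem IsRelPrime.map_mulEquiv {α β F : Type*} [Monoid α] [Monoid β] [EquivLike F α β]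
    [MulEquivClass F α β] (e : F) {a b : α} (h : IsRelPrime a b) : IsRelPrime (e a) (e b) :=
  .of_map (MulEquivClass.toMulEquiv e : α ≃* β).symm (by simpa using h)

namespace Polynomial

open IsLocalization nonZeroDivisors

theorem expand_dvd_expand_iff {R : Type*} [CommSemiring R] {p : ℕ} (hp : p ≠ 0) {f g : R[X]} :
    expand R p f ∣ expand R p g ↔ f ∣ g := by
  refine ⟨fun ⟨q, hq⟩ ↦ ⟨contract p q, ?_⟩, _root_.map_dvd (expand R p)⟩
  rw [← contract_expand (p := p) (f := g) hp, hq, mul_comm, contract_mul_expand hp, mul_comm]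

variable {R : Type*} [CommRing R] [IsDomain R]

theorem isRelPrime_C_C {a b : R} (h : IsRelPrime a b) : IsRelPrime (C a) (C b) := by
  rcases eq_or_ne a 0 with rfl | ha
  · rw [C_0, isRelPrime_zero_left] at *
    exact h.map C
  intro d hda hdb
  obtain ⟨c, rfl⟩ : ∃ c, d = C c := ⟨_, eq_C_of_natDegree_eq_zero <| Nat.eq_zero_of_le_zero <|
    (natDegree_le_of_dvd hda (C_ne_zero.2 ha)).trans_eq (natDegree_C a)⟩
  have hC {r : R} : C c ∣ C r → c ∣ r := fun h ↦ by simpa using (C_dvd_iff_dvd_coeff c _).1 h 0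
  exact (h (hC hda) (hC hdb)).map C

variable {K : Type*} [Field K] [Algebra R K] [IsFractionRing R K]

theorem map_primPart_integerNormalization_dvd [NormalizedGCDMonoid R] (d : K[X]) :
    (integerNormalization R⁰ d).primPart.map (algebraMap R K) ∣ d := by
  obtain ⟨c, hc, hcd⟩ := integerNormalization_spec R⁰ d
  have hunit : IsUnit (C (algebraMap R K c)) :=
    isUnit_C.2 <| (IsFractionRing.to_map_ne_zero_of_mem_nonZeroDivisors hc).isUnit
  refine (hunit.dvd_mul_left).1 ?_
  rw [← smul_eq_C_mul, algebraMap_smul, ← hcd]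
  exact map_dvd _ (primPart_dvd _)

theorem isCoprime_fraction_map_of_isRelPrime [IsGCDMonoid R] {f g : R[X]} (h : IsRelPrime f g)
    (hf : f ≠ 0) : IsCoprime (f.map (algebraMap R K)) (g.map (algebraMap R K)) := by
  let := Classical.arbitrary (NormalizedGCDMonoid R)
  rw [← isRelPrime_iff_isCoprime]
  intro d hdf hdg
  have hd : d ≠ 0 := by
    rintro rfl
    exact hf (map_injective _ (IsFractionRing.injective R K) (by simpa using hdf))
  refine isUnit_or_eq_zero_of_isUnit_integerNormalization_primPart hd (h ?_ ?_) <;>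
    exact (isPrimitive_primPart _).dvd_of_fraction_map_dvd_fraction_map
      ((map_primPart_integerNormalization_dvd d).trans ‹_›)

theorem isRelPrime_expand [IsGCDMonoid R] {f g : R[X]} {p : ℕ} (hp : p ≠ 0)
    (h : IsRelPrime f g) : IsRelPrime (expand R p f) (expand R p g) := by
  rcases eq_or_ne f 0 with rfl | hf
  · rw [isRelPrime_zero_left] at h
    rw [map_zero, isRelPrime_zero_left]
    exact h.map _
  have hK := isCoprime_fraction_map_of_isRelPrime (K := FractionRing R) h hf
  rw [← isCoprime_expand hp, ← map_expand, ← map_expand] at hK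
  intro d hdf hdg
  have hdK := hK.isUnit_of_dvd' (map_dvd _ hdf) (map_dvd _ hdg)
  obtain ⟨c, rfl⟩ : ∃ c, d = C c := ⟨_, eq_C_of_natDegree_eq_zero <| by
    rw [← natDegree_map_eq_of_injective (IsFractionRing.injective R (FractionRing R))]
    exact natDegree_eq_zero_of_isUnit hdK⟩
  rw [← expand_C (p := p), expand_dvd_expand_iff hp] at hdf hdg
  exact h hdf hdg

end Polynomial

namespace MvPolynomial

variable {σ R : Type*} [CommRing R]

noncomputable def polynomialEquivAt [DecidableEq σ] (i : σ) :
    MvPolynomial σ R ≃ₐ[R] Polynomial (MvPolynomial {j // j ≠ i} R) :=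
  (renameEquiv R (Equiv.optionSubtypeNe i).symm).trans (optionEquivLeft R _)

noncomputable def expandAt [DecidableEq σ] (i : σ) (m : ℕ) :
    MvPolynomial σ R →ₐ[R] MvPolynomial σ R :=
  aeval (Function.update X i (X i ^ m))

theorem polynomialEquivAt_expandAt [DecidableEq σ] (i : σ) (m : ℕ) (p : MvPolynomial σ R) :
    polynomialEquivAt i (expandAt i m p) = Polynomial.expand _ m (polynomialEquivAt i p) := by
  suffices (polynomialEquivAt i).toAlgHom.comp (expandAt i m) =
      ((Polynomial.expand _ m).restrictScalars R).comp (polynomialEquivAt i).toAlgHom from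
    DFunLike.congr_fun this p
  ext j
  by_cases hj : j = i
  · subst hj
    simp [polynomialEquivAt, expandAt, optionEquivLeft_X_none]
  · simp [polynomialEquivAt, expandAt, hj, Equiv.optionSubtypeNe_symm_of_ne hj,
      optionEquivLeft_X_some]

noncomputable def shiftSuccEquiv (n : ℕ) :
    MvPolynomial (Fin (n + 1)) R ≃ₐ[R] MvPolynomial (Fin (n + 1)) R :=
  AlgEquiv.ofAlgHom (aeval (Fin.cons (X 0) fun j ↦ X 0 + X j.succ))
    (aeval (Fin.cons (X 0) fun j ↦ X j.succ - X 0))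
    (by ext j; cases j using Fin.cases <;> simp)
    (by ext j; cases j using Fin.cases <;> simp)

variable [IsDomain R]

theorem isRelPrime_expandAt [UniqueFactorizationMonoid R] [DecidableEq σ] (i : σ)
    {m : ℕ} (hm : m ≠ 0) {f g : MvPolynomial σ R} (h : IsRelPrime f g) :
    IsRelPrime (expandAt i m f) (expandAt i m g) := by
  have key := Polynomial.isRelPrime_expand hm (h.map_mulEquiv (polynomialEquivAt i))
  rw [← polynomialEquivAt_expandAt, ← polynomialEquivAt_expandAt] at key
  simpa using key.map_mulEquiv (polynomialEquivAt i).symm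

theorem isRelPrime_aeval_ite_X_pow [UniqueFactorizationMonoid R] [DecidableEq σ] {e : σ → ℕ}
    (he : ∀ i, e i ≠ 0) {f g : MvPolynomial σ R} (h : IsRelPrime f g) (s : Finset σ) :
    IsRelPrime (aeval (fun j ↦ if j ∈ s then X j ^ e j else (X j : MvPolynomial σ R)) f)
      (aeval (fun j ↦ if j ∈ s then X j ^ e j else (X j : MvPolynomial σ R)) g) := by
  induction s using Finset.induction_on with
  | empty => simpa using h
  | insert i s hi ih =>
    have hcomp : aeval (fun j ↦ if j ∈ insert i s then X j ^ e j else (X j : MvPolynomial σ R)) =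
        (expandAt i (e i)).comp
          (aeval (fun j ↦ if j ∈ s then X j ^ e j else (X j : MvPolynomial σ R))) := by
      ext j
      by_cases hj : j = i
      · subst hj
        simp [expandAt, hi]
      · by_cases hjs : j ∈ s <;> simp [expandAt, hj, hjs]
    rw [hcomp]
    exact isRelPrime_expandAt i (he i) ih

theorem isRelPrime_aeval_X_pow [UniqueFactorizationMonoid R] [Fintype σ] {e : σ → ℕ}
    (he : ∀ i, e i ≠ 0) {f g : MvPolynomial σ R} (h : IsRelPrime f g) :
    IsRelPrime (aeval (fun j ↦ (X j : MvPolynomial σ R) ^ e j) f)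
      (aeval (fun j ↦ X j ^ e j) g) := by
  classical
  simpa using isRelPrime_aeval_ite_X_pow he h Finset.univ

theorem isRelPrime_rename_succ {n : ℕ} {f g : MvPolynomial (Fin n) R} (h : IsRelPrime f g) :
    IsRelPrime (rename Fin.succ f) (rename Fin.succ g) := by
  have hC (p : MvPolynomial (Fin n) R) :
      finSuccEquiv R n (rename Fin.succ p) = Polynomial.C p := by
    induction p using MvPolynomial.induction_on <;> simp_all [finSuccEquiv_apply]
  have key := (Polynomial.isRelPrime_C_C h).map_mulEquiv (finSuccEquiv R n).symm
  rwa [← hC f, ← hC g, AlgEquiv.symm_apply_apply, AlgEquiv.symm_apply_apply] at key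

end MvPolynomial

/-- `X 0` is the new variable `x` and `X i.succ` is `cᵢ₊₁`: the indices `i : Fin n` are
zero-based. -/
theorem stmt15_general (n D : ℕ) (f g : MvPolynomial (Fin n) ℤ)
    (hcop : IsRelPrime f g) :
    IsRelPrime
      ((aeval fun i : Fin n =>
        ((X 0 + X i.succ : MvPolynomial (Fin (n + 1)) ℤ) ^ (D + 1) ^ (i : ℕ))) f)
      ((aeval fun i : Fin n =>
        ((X 0 + X i.succ : MvPolynomial (Fin (n + 1)) ℤ) ^ (D + 1) ^ (i : ℕ))) g) := by
  have hφ : (aeval fun i : Fin n =>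
        ((X 0 + X i.succ : MvPolynomial (Fin (n + 1)) ℤ) ^ (D + 1) ^ (i : ℕ))) =
      ((shiftSuccEquiv n).toAlgHom.comp (rename Fin.succ)).comp
        (aeval fun i : Fin n ↦ (X i : MvPolynomial (Fin n) ℤ) ^ (D + 1) ^ (i : ℕ)) := by
    ext i
    simp [shiftSuccEquiv]
  have hpow := isRelPrime_aeval_X_pow (fun i : Fin n ↦ pow_ne_zero (i : ℕ) D.succ_ne_zero) hcop
  rw [hφ]
  exact (isRelPrime_rename_succ hpow).map_mulEquiv (shiftSuccEquiv n)

/-- In `MvPolynomial (Fin (n+1)) ℤ`, the variable `X 0` plays the role of the new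
variable `x`, and `X i.succ` plays the role of `cᵢ`. The substitution sends
`xᵢ ↦ (x + cᵢ) ^ (D+1)^(i-1)`. -/
theorem stmt15 (n D : ℕ) (f g : MvPolynomial (Fin n) ℤ)
    (hcop : IsRelPrime f g)
    (hdf : f.totalDegree ≤ D) (hdg : g.totalDegree ≤ D) :
    IsRelPrime
      ((aeval fun i : Fin n =>
        ((X 0 + X i.succ : MvPolynomial (Fin (n + 1)) ℤ) ^ (D + 1) ^ (i : ℕ))) f)
      ((aeval fun i : Fin n =>
        ((X 0 + X i.succ : MvPolynomial (Fin (n + 1)) ℤ) ^ (D + 1) ^ (i : ℕ))) g) :=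
  stmt15_general n D f g hcop
end

section
/- Let R be an integral domain, S₁,…,S_n ⊆ R finite subsets each of cardinality N, and r ∈ R[x₁,…,x_n] a nonzero polynomial of total degree at most d. Then r has at most d·N^{n−1} zeros in S₁ × S₂ × ⋯ × S_n. -/
/-! When every `Sᵢ` has `N` elements, the bound `max_s ∑ᵢ sᵢ / #Sᵢ` of Mathlib's
`schwartz_zippel_sup_sum` (maximum over the monomials `s` of `r`) is `totalDegree r / N`;
multiplying by `#(S₁ × ⋯ × Sₙ) = Nⁿ` gives the count. -/

open MvPolynomial Finset Fintype

namespace MvPolynomial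

theorem schwartz_zippel_totalDegree_of_card_eq {R : Type*} [CommRing R] [IsDomain R]
    [DecidableEq R] {n N : ℕ} {p : MvPolynomial (Fin n) R} (hp : p ≠ 0)
    {S : Fin n → Finset R} (hS : ∀ i, #(S i) = N) :
    #{x ∈ piFinset S | eval x p = 0} / (N ^ n : ℚ≥0) ≤ p.totalDegree / N :=
  calc
    _ = #{x ∈ piFinset S | eval x p = 0} / ∏ i, (#(S i) : ℚ≥0) := by simp [hS]
    _ ≤ p.support.sup fun s ↦ ∑ i, (s i / #(S i) : ℚ≥0) := schwartz_zippel_sup_sum hp S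
    _ = p.totalDegree / N := by
      simp_rw [hS, totalDegree, Nat.cast_finsetSup]
      rw [sup_div₀ (by positivity)]
      simp [← sum_div, Finsupp.sum_fintype]

end MvPolynomial

theorem Nat.cast_pow_div_self_le_pow_pred (N n : ℕ) :
    (N ^ n / N : ℚ≥0) ≤ (N : ℚ≥0) ^ (n - 1) := by
  rcases n with _ | n
  · simpa using Nat.cast_inv_le_one N
  · rcases eq_or_ne N 0 with rfl | hN
    · simp
    · simp [pow_succ, hN]

theorem stmt16 (R : Type*) [CommRing R] [IsDomain R] [DecidableEq R]
    (n N d : ℕ) (S : Fin n → Finset R) (hS : ∀ i, (S i).card = N)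
    (r : MvPolynomial (Fin n) R) (hr : r ≠ 0) (hd : r.totalDegree ≤ d) :
    ((Fintype.piFinset S).filter fun a => eval a r = 0).card ≤ d * N ^ (n - 1) := by
  have hcard : #(piFinset S) = N ^ n := by simp [hS]
  rcases (N ^ n).eq_zero_or_pos with hNn | hNn
  · exact (card_filter_le _ _).trans (by simp [hcard, hNn])
  have hNn' : (N : ℚ≥0) ^ n ≠ 0 := by exact_mod_cast hNn.ne'
  suffices (#{a ∈ piFinset S | eval a r = 0} : ℚ≥0) ≤ d * N ^ (n - 1) by exact_mod_cast this
  calc (#{a ∈ piFinset S | eval a r = 0} : ℚ≥0)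
      = #{a ∈ piFinset S | eval a r = 0} / N ^ n * N ^ n := (div_mul_cancel₀ _ hNn').symm
    _ ≤ r.totalDegree / N * N ^ n :=
      mul_le_mul_left (schwartz_zippel_totalDegree_of_card_eq hr hS) _
    _ = r.totalDegree * (N ^ n / N) := by ring
    _ ≤ d * N ^ (n - 1) :=
      mul_le_mul' (by exact_mod_cast hd) (Nat.cast_pow_div_self_le_pow_pred N n)
end

section
/- Let f = c₁m₁ + ⋯ + c_t m_t ∈ ℤ[x₁,…,x_n], m₁ < ⋯ < m_t lexicographically, m_t = x₁^{e₁}⋯x_n^{e_n}, with |cᵢ| ≤ C, total degree ≤ D. Let β ≥ 2C+1, β₁ ≥ β, βᵢ ≥ β_{i−1}^{D+1} for i ≥ 2. Set Q = (f(β₁,…,β_{n−1},β_n)/β_n^{e_n}) / (f(β₁,…,β_{n−1},β_n+1)/(β_n+1)^{e_n}) and E = 1 + 2C/((β₁−1)(β_n−1)). Then 1/E < Q < E. -/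
/-!
Write `x = β_n`, `e = e_n`, and split each monomial as `mᵢ = pᵢ · x^{kᵢ}`, `pᵢ` the part in the
other variables. Then both normalized evaluations are the same sum `∑ cᵢ pᵢ u^{e - kᵢ}`, taken at
`u = 1/x` and at `u = 1/(x+1)`. The chain condition `β_{j+1} ≥ β_j^{D+1}` makes the value of
every monomial at least `β₁` times that of any colex-smaller one, so the values grow
geometrically: the leading term dominates, and the denominator is at least `1/2` in absolute
value. The difference of the two evaluations is at most `C ∑ pᵢ (x^{-dᵢ} - (x+1)^{-dᵢ})`, which
is `< C / ((β₁ - 1) x)`: with one variable the exponents `dᵢ` are distinct and the full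
telescoping series sums to `1/(x(x-1))`; with several, every non-leading normalized monomial is
at most `1/(e β₁)` because its other variables contribute at most `β_{n-1}^{D-kᵢ}` while
`x ≥ β_{n-1}^{D+1}`. Hence `|Q - 1| < 2C / ((β₁ - 1)(β_n - 1) + 2C) = 1 - 1/E`.
-/

open Finset

section OrderedRing

variable {K : Type*} [CommRing K] [LinearOrder K] [IsStrictOrderedRing K]

theorem sub_one_mul_sum_le_of_forall_lt {ι : Type*} [LinearOrder ι] {b : K} {w : ι → K}
    (hw : ∀ i, 0 ≤ w i) (hb : ∀ i j, i < j → b * w i ≤ w j) (s : Finset ι) {k : ι}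
    (hk : ∀ i ∈ s, i < k) : (b - 1) * ∑ i ∈ s, w i ≤ w k := by
  classical
  induction s using Finset.induction_on_max generalizing k with
  | empty => simpa using hw k
  | insert a s hs ih =>
    have ha : a < k := hk a (mem_insert_self a s)
    rw [sum_insert fun has => (hs a has).false, mul_add]
    linear_combination ih (fun i hi => hs i hi) + hb a k ha

theorem le_two_mul_abs_sum_of_dominant {ι : Type*} [DecidableEq ι] {s : Finset ι} {a : ι}
    (ha : a ∈ s) {c v : ι → K} {C : K} (hv : ∀ i ∈ s, 0 ≤ v i) (hc : ∀ i ∈ s, |c i| ≤ C)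
    (hca : 1 ≤ |c a|) (hdom : 2 * C * ∑ i ∈ s.erase a, v i ≤ v a) :
    v a ≤ 2 * |∑ i ∈ s, c i * v i| := by
  have hrest : |∑ i ∈ s.erase a, c i * v i| ≤ C * ∑ i ∈ s.erase a, v i := by
    rw [mul_sum]
    refine (abs_sum_le_sum_abs _ _).trans (sum_le_sum fun i hi => ?_)
    have hi' := mem_of_mem_erase hi
    rw [abs_mul, abs_of_nonneg (hv i hi')]
    exact mul_le_mul_of_nonneg_right (hc i hi') (hv i hi')
  have hlead : v a ≤ |c a * v a| := by
    rw [abs_mul, abs_of_nonneg (hv a ha)]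
    exact le_mul_of_one_le_left (hv a ha) hca
  rw [← add_sum_erase s _ ha]
  have := abs_sub_abs_le_abs_add (c a * v a) (∑ i ∈ s.erase a, c i * v i)
  linarith

theorem prod_pow_le_pow_sum {ι : Type*} {s : Finset ι} {f : ι → K} {M : K}
    (hf : ∀ i ∈ s, 0 ≤ f i) (hM : ∀ i ∈ s, f i ≤ M) (u : ι → ℕ) :
    ∏ i ∈ s, f i ^ u i ≤ M ^ ∑ i ∈ s, u i := by
  rw [← prod_pow_eq_pow_sum]
  exact prod_le_prod (fun i hi => pow_nonneg (hf i hi) _)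
    fun i hi => pow_le_pow_left₀ (hf i hi) (hM i hi) _

theorem mul_pow_sub_pow_le {y z : K} (hz : 0 ≤ z) (hzy : z ≤ y) (d : ℕ) :
    y * (y ^ d - z ^ d) ≤ d * (y - z) * y ^ d := by
  rcases d with _ | d
  · simp
  have h := abs_pow_sub_pow_le y z (d + 1)
  rw [abs_of_nonneg (sub_nonneg.2 (pow_le_pow_left₀ hz hzy _)), abs_of_nonneg (sub_nonneg.2 hzy),
    max_eq_left (by rwa [abs_of_nonneg hz, abs_of_nonneg (hz.trans hzy)]),
    abs_of_nonneg (hz.trans hzy), Nat.add_sub_cancel] at h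
  calc y * (y ^ (d + 1) - z ^ (d + 1)) ≤ y * ((y - z) * ↑(d + 1) * y ^ d) :=
        mul_le_mul_of_nonneg_left h (hz.trans hzy)
    _ = _ := by ring

theorem nat_mul_mul_pow_le_pow {b γ x : K} {D E d r : ℕ} (hγ : 2 ≤ γ) (hb0 : 0 ≤ b)
    (hb : b ≤ γ) (hx : γ ^ (D + 1) ≤ x) (hE : 0 < E) (hd : 0 < d) (hr : r + E ≤ D + d) :
    E * b * γ ^ r ≤ x ^ d := by
  obtain ⟨E, rfl⟩ := Nat.exists_eq_add_one_of_ne_zero hE.ne'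
  obtain ⟨d, rfl⟩ := Nat.exists_eq_add_one_of_ne_zero hd.ne'
  have hγ1 : 1 ≤ γ := by linarith
  have hE2 : ((E + 1 : ℕ) : K) ≤ γ ^ E := by
    calc ((E + 1 : ℕ) : K) ≤ ((2 ^ E : ℕ) : K) := by exact_mod_cast Nat.lt_two_pow_self
      _ = 2 ^ E := by push_cast; ring
      _ ≤ γ ^ E := pow_le_pow_left₀ (by norm_num) hγ E
  have hγx : γ ≤ x := (le_self_pow₀ hγ1 (Nat.succ_ne_zero D)).trans hx
  calc ((E + 1 : ℕ) : K) * b * γ ^ r ≤ γ ^ E * γ * γ ^ r := by gcongr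
      _ = γ ^ (r + (E + 1)) := by ring
      _ ≤ γ ^ (D + 1 + d) := pow_le_pow_right₀ hγ1 (by omega)
      _ = γ ^ (D + 1) * γ ^ d := pow_add _ _ _
      _ ≤ x * x ^ d := by gcongr; linarith
      _ = x ^ (d + 1) := by ring

end OrderedRing

section ShiftLast

variable {K : Type*} [Add K] [One K] {n : ℕ}

def shiftLast (h : Fin (n + 1) → K) : Fin (n + 1) → K :=
  fun j => if j = Fin.last n then h j + 1 else h j

@[simp]
theorem shiftLast_castSucc (h : Fin (n + 1) → K) (j : Fin n) :
    shiftLast h j.castSucc = h j.castSucc :=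
  if_neg (Fin.castSucc_ne_last j)

@[simp]
theorem shiftLast_last (h : Fin (n + 1) → K) :
    shiftLast h (Fin.last n) = h (Fin.last n) + 1 :=
  if_pos rfl

end ShiftLast

section ChainWeight

variable {K : Type*} [CommRing K] [LinearOrder K]

/-- The paper's weights `β₁, …, β_n` are `h 0, …, h (Fin.last n)`. -/
structure IsChainWeight (D : ℕ) (b : K) {n : ℕ} (h : Fin (n + 1) → K) : Prop where
  one_le : 1 ≤ b
  le_apply_zero : b ≤ h 0
  pow_le_apply_succ : ∀ j : Fin n, h j.castSucc ^ (D + 1) ≤ h j.succ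

namespace IsChainWeight

variable {D n : ℕ} {b : K} {h : Fin (n + 1) → K} (hw : IsChainWeight D b h)
include hw

theorem of_le_last {h' : Fin (n + 1) → K} (hlast : h (Fin.last n) ≤ h' (Fin.last n))
    (hrest : ∀ j : Fin n, h' j.castSucc = h j.castSucc) : IsChainWeight D b h' := by
  have hle : ∀ j, h j ≤ h' j := Fin.lastCases hlast fun j => (hrest j).ge
  exact ⟨hw.one_le, hw.le_apply_zero.trans (hle 0),
    fun j => hrest j ▸ (hw.pow_le_apply_succ j).trans (hle _)⟩

variable [IsStrictOrderedRing K]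

theorem le_apply : ∀ j, b ≤ h j :=
  Fin.induction hw.le_apply_zero fun j hj =>
    hj.trans <| (le_self_pow₀ (hw.one_le.trans hj) (Nat.succ_ne_zero D)).trans
      (hw.pow_le_apply_succ j)

theorem one_le_apply (j : Fin (n + 1)) : 1 ≤ h j := hw.one_le.trans (hw.le_apply j)

theorem nonneg (j : Fin (n + 1)) : 0 ≤ h j := zero_le_one.trans (hw.one_le_apply j)

theorem monotone : Monotone h :=
  Fin.monotone_iff_le_succ.2 fun j =>
    (le_self_pow₀ (hw.one_le_apply _) (Nat.succ_ne_zero D)).trans (hw.pow_le_apply_succ j)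

theorem one_le_prod_pow (s : Finset (Fin (n + 1))) (u : Fin (n + 1) → ℕ) :
    1 ≤ ∏ j ∈ s, h j ^ u j :=
  one_le_prod fun j _ => one_le_pow₀ (hw.one_le_apply j)

theorem mul_prod_pow_Iio_le {u : Fin (n + 1) → ℕ} (hu : ∑ j, u j ≤ D) (j : Fin (n + 1)) :
    b * ∏ i ∈ Iio j, h i ^ u i ≤ h j := by
  rcases Fin.eq_zero_or_eq_succ j with rfl | ⟨j, rfl⟩
  · rw [Iio_eq_empty.2 fun i _ => Fin.zero_le i, prod_empty, mul_one]
    exact hw.le_apply_zero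
  set M := h j.castSucc
  have hprod : ∏ i ∈ Iio j.succ, h i ^ u i ≤ M ^ D :=
    (prod_pow_le_pow_sum (fun i _ => hw.nonneg i)
      (fun i hi => hw.monotone (Fin.le_castSucc_iff.2 (mem_Iio.1 hi))) u).trans
      (pow_le_pow_right₀ (hw.one_le_apply _) ((sum_le_sum_of_subset (subset_univ _)).trans hu))
  calc b * ∏ i ∈ Iio j.succ, h i ^ u i ≤ M * M ^ D :=
        mul_le_mul (hw.le_apply _) hprod ((hw.one_le_prod_pow _ _).trans' zero_le_one)
          (hw.nonneg _)
    _ = M ^ (D + 1) := (pow_succ' M D).symm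
    _ ≤ h j.succ := hw.pow_le_apply_succ j

theorem mul_prod_pow_le_prod_pow {u v : Fin (n + 1) → ℕ} (hu : ∑ j, u j ≤ D)
    (huv : toColex u < toColex v) : b * ∏ j, h j ^ u j ≤ ∏ j, h j ^ v j := by
  obtain ⟨j, htail, hj⟩ := huv
  simp only [Pi.toColex_apply] at htail hj
  have split : ∀ w : Fin (n + 1) → ℕ, ∏ i, h i ^ w i =
      (∏ i ∈ Iio j, h i ^ w i) * h j ^ w j * ∏ i ∈ Ioi j, h i ^ w i := by
    intro w
    rw [prod_Iio_mul_eq_prod_Iic, ← prod_mul_prod_compl (Iic j)]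
    congr 2
    ext
    simp
  have htail' : ∏ i ∈ Ioi j, h i ^ u i = ∏ i ∈ Ioi j, h i ^ v i :=
    prod_congr rfl fun i hi => by rw [htail i (mem_Ioi.1 hi)]
  have hT : 0 ≤ ∏ i ∈ Ioi j, h i ^ v i := (hw.one_le_prod_pow _ _).trans' zero_le_one
  rw [split u, split v, htail']
  calc b * ((∏ i ∈ Iio j, h i ^ u i) * h j ^ u j * ∏ i ∈ Ioi j, h i ^ v i)
      = (b * ∏ i ∈ Iio j, h i ^ u i) * h j ^ u j * ∏ i ∈ Ioi j, h i ^ v i := by ring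
    _ ≤ h j * h j ^ u j * ∏ i ∈ Ioi j, h i ^ v i :=
        mul_le_mul_of_nonneg_right (mul_le_mul_of_nonneg_right (hw.mul_prod_pow_Iio_le hu j)
          (pow_nonneg (hw.nonneg j) _)) hT
    _ = h j ^ (u j + 1) * ∏ i ∈ Ioi j, h i ^ v i := by ring
    _ ≤ 1 * h j ^ v j * ∏ i ∈ Ioi j, h i ^ v i := by
        rw [one_mul]
        exact mul_le_mul_of_nonneg_right (pow_le_pow_right₀ (hw.one_le_apply j) hj) hT
    _ ≤ (∏ i ∈ Iio j, h i ^ v i) * h j ^ v j * ∏ i ∈ Ioi j, h i ^ v i :=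
        mul_le_mul_of_nonneg_right (mul_le_mul_of_nonneg_right (hw.one_le_prod_pow _ _)
          (pow_nonneg (hw.nonneg j) _)) hT

theorem prod_pow_le_two_mul_abs_sum {ι : Type*} [LinearOrder ι] [Fintype ι]
    {m : ι → Fin (n + 1) → ℕ} (hdeg : ∀ i, ∑ j, m i j ≤ D)
    (hlex : ∀ i i', i < i' → toColex (m i) < toColex (m i')) {top : ι} (htop : ∀ i, i ≤ top)
    {c : ι → K} {C : K} (hc : ∀ i, |c i| ≤ C) (hctop : 1 ≤ |c top|) (hCb : 2 * C ≤ b - 1) :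
    ∏ j, h j ^ m top j ≤ 2 * |∑ i, c i * ∏ j, h j ^ m i j| := by
  classical
  have hV : ∀ i, 0 ≤ ∏ j, h j ^ m i j := fun i => (hw.one_le_prod_pow _ _).trans' zero_le_one
  refine le_two_mul_abs_sum_of_dominant (mem_univ top) (fun i _ => hV i) (fun i _ => hc i) hctop ?_
  have hgeom := sub_one_mul_sum_le_of_forall_lt hV
    (fun i i' hii' => hw.mul_prod_pow_le_prod_pow (hdeg i) (hlex i i' hii')) (univ.erase top)
    fun i hi => (htop i).lt_of_ne (ne_of_mem_erase hi)
  exact (mul_le_mul_of_nonneg_right hCb (sum_nonneg fun i _ => hV i)).trans hgeom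

end IsChainWeight

end ChainWeight

section OrderedField

variable {K : Type*} [Field K] [LinearOrder K] [IsStrictOrderedRing K]

theorem sum_pow_sub_pow_lt_of_injective {ι : Type*} [Fintype ι] {d : ι → ℕ}
    (hd : Function.Injective d) {y z : K} (hz : 0 ≤ z) (hzy : z < y) (hy : y < 1) :
    ∑ i, (y ^ d i - z ^ d i) < (1 - y)⁻¹ - (1 - z)⁻¹ := by
  classical
  set N := univ.sup d + 1
  have geom : ∀ w : K, w < 1 → ∑ k ∈ range N, w ^ k = (1 - w)⁻¹ - w ^ N / (1 - w) := by
    intro w hw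
    rw [geom_sum_eq hw.ne]
    field_simp [(sub_pos.2 hw).ne', (sub_neg.2 hw).ne]
    ring
  have tail : z ^ N / (1 - z) < y ^ N / (1 - y) :=
    calc z ^ N / (1 - z) ≤ y ^ N / (1 - z) :=
          div_le_div_of_nonneg_right (pow_le_pow_left₀ hz hzy.le N) (by linarith)
      _ < y ^ N / (1 - y) :=
          div_lt_div_of_pos_left (pow_pos (hz.trans_lt hzy) N) (by linarith) (by linarith)
  calc ∑ i, (y ^ d i - z ^ d i) = ∑ k ∈ univ.image d, (y ^ k - z ^ k) := by
        rw [sum_image fun i _ j _ hij => hd hij]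
    _ ≤ ∑ k ∈ range N, (y ^ k - z ^ k) := by
        refine sum_le_sum_of_subset_of_nonneg (fun k hk => ?_)
          fun k _ _ => sub_nonneg.2 (pow_le_pow_left₀ hz hzy.le k)
        obtain ⟨i, -, rfl⟩ := mem_image.1 hk
        exact mem_range.2 (Nat.lt_succ_of_le (le_sup (mem_univ i)))
    _ < (1 - y)⁻¹ - (1 - z)⁻¹ := by
        rw [sum_sub_distrib, geom y hy, geom z (hzy.trans hy)]
        linarith

theorem sub_one_mul_mul_sum_mul_pow_sub_pow_le {ι : Type*} [LinearOrder ι] [Fintype ι]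
    {p : ι → K} {d : ι → ℕ} {b y z : K} {E : ℕ} (hb : 1 ≤ b) (hz : 0 ≤ z) (hzy : z ≤ y)
    (hp : ∀ i, 0 ≤ p i) (hdE : ∀ i, d i ≤ E)
    (hgrowth : ∀ i i', i < i' → b * (p i * y ^ d i) ≤ p i' * y ^ d i')
    (hsmall : ∀ i, 0 < d i → E * b * (p i * y ^ d i) ≤ 1) :
    (b - 1) * y * ∑ i, p i * (y ^ d i - z ^ d i) ≤ y - z := by
  classical
  set w := fun i => p i * y ^ d i
  have hw : ∀ i, 0 ≤ w i := fun i => mul_nonneg (hp i) (pow_nonneg (hz.trans hzy) _)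
  set S := univ.filter (fun i => 0 < d i)
  have hterm : ∀ i, y * (p i * (y ^ d i - z ^ d i)) ≤ (y - z) * (E * w i) := fun i =>
    calc y * (p i * (y ^ d i - z ^ d i)) = p i * (y * (y ^ d i - z ^ d i)) := by ring
      _ ≤ p i * (d i * (y - z) * y ^ d i) :=
          mul_le_mul_of_nonneg_left (mul_pow_sub_pow_le hz hzy _) (hp i)
      _ ≤ p i * (E * (y - z) * y ^ d i) := by
          have hdE' : (d i : K) ≤ E := by exact_mod_cast hdE i
          have := sub_nonneg.2 hzy
          have := pow_nonneg (hz.trans hzy) (d i)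
          have := hp i
          gcongr
      _ = (y - z) * (E * w i) := by ring
  have hS : ∑ i, p i * (y ^ d i - z ^ d i) = ∑ i ∈ S, p i * (y ^ d i - z ^ d i) :=
    (sum_filter_of_ne fun i _ hne => Nat.pos_of_ne_zero fun h0 => hne (by simp [h0])).symm
  rcases S.eq_empty_or_nonempty with hSe | hSne
  · rw [hS, hSe, sum_empty, mul_zero]
    exact sub_nonneg.2 hzy
  set k := S.max' hSne
  have hk : k ∈ S := S.max'_mem hSne
  have hgeom : (b - 1) * ∑ i ∈ S, w i ≤ b * w k := by
    have := sub_one_mul_sum_le_of_forall_lt hw hgrowth (S.erase k)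
      fun i hi => S.lt_max'_of_mem_erase_max' hSne hi
    rw [← add_sum_erase S w hk]
    linarith
  have hsmall' := hsmall k (mem_filter.1 hk).2
  calc (b - 1) * y * ∑ i, p i * (y ^ d i - z ^ d i)
      = (b - 1) * ∑ i ∈ S, y * (p i * (y ^ d i - z ^ d i)) := by
        rw [hS, mul_sum, mul_sum]
        exact sum_congr rfl fun i _ => mul_assoc _ _ _
    _ ≤ (b - 1) * ∑ i ∈ S, (y - z) * (E * w i) :=
        mul_le_mul_of_nonneg_left (sum_le_sum fun i _ => hterm i) (by linarith)
    _ = (y - z) * E * ((b - 1) * ∑ i ∈ S, w i) := by rw [← mul_sum, ← mul_sum]; ring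
    _ ≤ (y - z) * E * (b * w k) :=
        mul_le_mul_of_nonneg_left hgeom (mul_nonneg (sub_nonneg.2 hzy) (Nat.cast_nonneg E))
    _ = (y - z) * (E * b * w k) := by ring
    _ ≤ (y - z) * 1 := mul_le_mul_of_nonneg_left hsmall' (sub_nonneg.2 hzy)
    _ = y - z := mul_one _

theorem prod_pow_div_pow_last {n E : ℕ} {h : Fin (n + 1) → K} (hx : h (Fin.last n) ≠ 0)
    {u : Fin (n + 1) → ℕ} (hu : u (Fin.last n) ≤ E) :
    (∏ j, h j ^ u j) / h (Fin.last n) ^ E =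
      (∏ j : Fin n, h j.castSucc ^ u j.castSucc) *
        (h (Fin.last n))⁻¹ ^ (E - u (Fin.last n)) := by
  obtain ⟨d, rfl⟩ := Nat.exists_eq_add_of_le hu
  rw [Fin.prod_univ_castSucc, Nat.add_sub_cancel_left, inv_pow]
  field_simp
  ring

theorem prod_shiftLast_pow_div_pow_last {n E : ℕ} {h : Fin (n + 1) → K}
    (hx : h (Fin.last n) + 1 ≠ 0) {u : Fin (n + 1) → ℕ} (hu : u (Fin.last n) ≤ E) :
    (∏ j, shiftLast h j ^ u j) / (h (Fin.last n) + 1) ^ E =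
      (∏ j : Fin n, h j.castSucc ^ u j.castSucc) *
        (h (Fin.last n) + 1)⁻¹ ^ (E - u (Fin.last n)) := by
  simpa using prod_pow_div_pow_last (h := shiftLast h) (by simpa) hu

/-- With `x = h (Fin.last n)` and `m i (Fin.last n) ≤ E`, the `i`-th term is
`mᵢ(h) / x^E - mᵢ(shiftLast h) / (x+1)^E`. -/
def shiftDefect {ι : Type*} [Fintype ι] {n : ℕ} (h : Fin (n + 1) → K)
    (m : ι → Fin (n + 1) → ℕ) (E : ℕ) : K :=
  ∑ i, (∏ j : Fin n, h j.castSucc ^ m i j.castSucc) *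
    ((h (Fin.last n))⁻¹ ^ (E - m i (Fin.last n)) -
      (h (Fin.last n) + 1)⁻¹ ^ (E - m i (Fin.last n)))

theorem one_div_lt_div_and_div_lt {A B C Z b x : K} (hC : 0 < C) (hCb : 2 * C ≤ b - 1)
    (hx : 1 < x) (hB : 1 ≤ 2 * |B|) (hAB : |A - B| ≤ C * Z) (hZ : (b - 1) * x * Z < 1) :
    1 / (1 + 2 * C / ((b - 1) * (x - 1))) < A / B ∧ A / B < 1 + 2 * C / ((b - 1) * (x - 1)) := by
  set P := (b - 1) * (x - 1)
  have hP : 0 < P := mul_pos (by linarith) (by linarith)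
  have hBpos : 0 < |B| := by linarith
  have hB0 : B ≠ 0 := abs_pos.1 hBpos
  have hZ0 : 0 ≤ Z := nonneg_of_mul_nonneg_right ((abs_nonneg _).trans hAB) hC
  have hdev : |A / B - 1| < 2 * C / (P + 2 * C) := by
    rw [div_sub_one hB0, abs_div, div_lt_div_iff₀ hBpos (by linarith)]
    calc |A - B| * (P + 2 * C) ≤ C * Z * ((b - 1) * x) := by
          apply mul_le_mul hAB (by linarith) (by linarith) (mul_nonneg hC.le hZ0)
      _ = C * ((b - 1) * x * Z) := by ring
      _ < C * 1 := mul_lt_mul_of_pos_left hZ hC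
      _ ≤ C * (2 * |B|) := mul_le_mul_of_nonneg_left hB hC.le
      _ = 2 * C * |B| := by ring
  obtain ⟨hlo, hhi⟩ := abs_sub_lt_iff.1 hdev
  constructor
  · have : 1 / (1 + 2 * C / P) = 1 - 2 * C / (P + 2 * C) := by
      field_simp
      ring
    linarith
  · have : 2 * C / (P + 2 * C) ≤ 2 * C / P :=
      div_le_div_of_nonneg_left (by linarith) hP (by linarith)
    linarith

namespace IsChainWeight

variable {ι : Type*} [Fintype ι] {D E n : ℕ} {b : K}

theorem abs_sub_le_mul_shiftDefect {h : Fin (n + 1) → K} {m : ι → Fin (n + 1) → ℕ}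
    (hw : IsChainWeight D b h) {c : ι → K} {C : K} (hc : ∀ i, |c i| ≤ C) (hE : ∀ i, m i (Fin.last n) ≤ E) :
    |(∑ i, c i * ∏ j, h j ^ m i j) / h (Fin.last n) ^ E -
        (∑ i, c i * ∏ j, shiftLast h j ^ m i j) /
          (h (Fin.last n) + 1) ^ E| ≤ C * shiftDefect h m E := by
  have hx : 1 ≤ h (Fin.last n) := hw.one_le_apply _
  have hzy : (h (Fin.last n) + 1)⁻¹ ≤ (h (Fin.last n))⁻¹ := inv_anti₀ (by linarith) (by linarith)
  rw [sum_div, sum_div, ← sum_sub_distrib, shiftDefect, mul_sum]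
  refine (abs_sum_le_sum_abs _ _).trans (sum_le_sum fun i _ => ?_)
  rw [mul_div_assoc, mul_div_assoc, prod_pow_div_pow_last (by linarith) (hE i),
    prod_shiftLast_pow_div_pow_last (by linarith) (hE i), ← mul_sub, ← mul_sub, abs_mul]
  refine mul_le_mul (hc i) (abs_of_nonneg ?_).le (abs_nonneg _) ((abs_nonneg _).trans (hc i))
  exact mul_nonneg (prod_nonneg fun j _ => pow_nonneg (hw.nonneg _) _)
    (sub_nonneg.2 (pow_le_pow_left₀ (by positivity) hzy _))

variable [LinearOrder ι]

theorem sub_one_mul_mul_shiftDefect_lt_one_of_fin_one {h : Fin 1 → K} {m : ι → Fin 1 → ℕ}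
    (hw : IsChainWeight D b h) (hb : 1 < b)
    (hlex : ∀ i i', i < i' → toColex (m i) < toColex (m i'))
    (hE : ∀ i, m i (Fin.last 0) ≤ E) :
    (b - 1) * h (Fin.last 0) * shiftDefect h m E < 1 := by
  set x := h (Fin.last 0)
  have hbx : b ≤ x := hw.le_apply _
  have hx : 1 < x := hb.trans_le hbx
  have hmono : StrictMono fun i => m i (Fin.last 0) := fun i i' hii' => by
    simpa using Pi.Colex.lt_iff_of_unique.1 (hlex i i' hii')
  have hinj : Function.Injective fun i => E - m i (Fin.last 0) := fun i i' hii' =>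
    hmono.injective (by have := hE i; have := hE i'; simp only at hii' ⊢; omega)
  have hx0 : x ≠ 0 := by linarith
  have hx1 : x - 1 ≠ 0 := by linarith
  have hzy : (x + 1)⁻¹ < x⁻¹ := inv_strictAnti₀ (by linarith) (by linarith)
  have hval : (1 - x⁻¹)⁻¹ - (1 - (x + 1)⁻¹)⁻¹ = (x * (x - 1))⁻¹ := by
    have : x + 1 ≠ 0 := by linarith
    rw [show 1 - x⁻¹ = (x - 1) / x by field_simp,
      show 1 - (x + 1)⁻¹ = x / (x + 1) by field_simp; ring, inv_div, inv_div]
    field_simp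
    ring
  simp only [shiftDefect, Fin.prod_univ_zero, one_mul]
  set Z := ∑ i, (x⁻¹ ^ (E - m i (Fin.last 0)) - (x + 1)⁻¹ ^ (E - m i (Fin.last 0)))
  have hZ : Z < (x * (x - 1))⁻¹ :=
    hval ▸ sum_pow_sub_pow_lt_of_injective hinj (inv_nonneg.2 (by linarith)) hzy
      (inv_lt_one_of_one_lt₀ hx)
  have hZ0 : 0 ≤ Z := sum_nonneg fun i _ => sub_nonneg.2 (pow_le_pow_left₀ (by positivity) hzy.le _)
  calc (b - 1) * x * Z ≤ (x - 1) * x * Z :=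
        mul_le_mul_of_nonneg_right (mul_le_mul_of_nonneg_right (by linarith) (by linarith)) hZ0
    _ < (x - 1) * x * (x * (x - 1))⁻¹ :=
        mul_lt_mul_of_pos_left hZ (mul_pos (by linarith) (by linarith))
    _ = 1 := by field_simp

theorem sub_one_mul_mul_shiftDefect_lt_one_of_fin_add_two {h : Fin (n + 2) → K}
    {m : ι → Fin (n + 2) → ℕ} (hw : IsChainWeight D b h) (hb : 2 ≤ b)
    (hdeg : ∀ i, ∑ j, m i j ≤ D) (hlex : ∀ i i', i < i' → toColex (m i) < toColex (m i'))
    (hE : ∀ i, m i (Fin.last (n + 1)) ≤ E) :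
    (b - 1) * h (Fin.last (n + 1)) * shiftDefect h m E < 1 := by
  set x := h (Fin.last (n + 1))
  set γ := h (Fin.last n).castSucc
  have hx : 2 ≤ x := hb.trans (hw.le_apply _)
  have hγ : 2 ≤ γ := hb.trans (hw.le_apply _)
  have hγx : γ ^ (D + 1) ≤ x := by simpa using hw.pow_le_apply_succ (Fin.last n)
  have hzy : (x + 1)⁻¹ ≤ x⁻¹ := inv_anti₀ (by linarith) (by linarith)
  set p := fun i => ∏ j : Fin (n + 1), h j.castSucc ^ m i j.castSucc
  set d := fun i => E - m i (Fin.last (n + 1))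
  have hp : ∀ i, 0 ≤ p i := fun i =>
    prod_nonneg fun j _ => pow_nonneg (hw.nonneg _) _
  have hnorm : ∀ i, p i * x⁻¹ ^ d i = (∏ j, h j ^ m i j) / x ^ E := fun i =>
    (prod_pow_div_pow_last (by linarith) (hE i)).symm
  have hgrowth : ∀ i i', i < i' → b * (p i * x⁻¹ ^ d i) ≤ p i' * x⁻¹ ^ d i' := by
    intro i i' hii'
    rw [hnorm, hnorm, ← mul_div_assoc]
    exact div_le_div_of_nonneg_right (hw.mul_prod_pow_le_prod_pow (hdeg i) (hlex i i' hii'))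
      (pow_nonneg (by linarith) _)
  have hsmall : ∀ i, 0 < d i → E * b * (p i * x⁻¹ ^ d i) ≤ 1 := by
    intro i hi
    have hr : ∑ j : Fin (n + 1), m i j.castSucc + m i (Fin.last (n + 1)) ≤ D :=
      (Fin.sum_univ_castSucc (m i)).symm ▸ hdeg i
    have hpγ : p i ≤ γ ^ ∑ j : Fin (n + 1), m i j.castSucc :=
      prod_pow_le_pow_sum (fun j _ => hw.nonneg _)
        (fun j _ => hw.monotone (Fin.castSucc_le_castSucc_iff.2 (Fin.le_last j))) _
    have := nat_mul_mul_pow_le_pow hγ (by linarith) (hw.le_apply _) hγx (E := E)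
      (r := ∑ j : Fin (n + 1), m i j.castSucc)
      (by simp only [d] at hi; omega) hi (by simp only [d] at hi ⊢; omega)
    rw [inv_pow, ← mul_assoc, ← div_eq_mul_inv, div_le_one (pow_pos (by linarith) _)]
    exact (mul_le_mul_of_nonneg_left hpγ (by positivity)).trans this
  have key : (b - 1) * x⁻¹ * shiftDefect h m E ≤ x⁻¹ - (x + 1)⁻¹ :=
    sub_one_mul_mul_sum_mul_pow_sub_pow_le (by linarith) (by positivity) hzy hp
      (fun i => Nat.sub_le E _) hgrowth hsmall
  calc (b - 1) * x * shiftDefect h m E = x ^ 2 * ((b - 1) * x⁻¹ * shiftDefect h m E) := by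
        have : x ≠ 0 := by linarith
        field_simp
    _ ≤ x ^ 2 * (x⁻¹ - (x + 1)⁻¹) := mul_le_mul_of_nonneg_left key (sq_nonneg x)
    _ = x / (x + 1) := by
        have : x ≠ 0 := by linarith
        have : x + 1 ≠ 0 := by linarith
        field_simp
        ring
    _ < 1 := (div_lt_one (by linarith)).2 (by linarith)

theorem sub_one_mul_mul_shiftDefect_lt_one {h : Fin (n + 1) → K} {m : ι → Fin (n + 1) → ℕ}
    (hw : IsChainWeight D b h)
    (hb : 2 ≤ b) (hdeg : ∀ i, ∑ j, m i j ≤ D)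
    (hlex : ∀ i i', i < i' → toColex (m i) < toColex (m i'))
    (hE : ∀ i, m i (Fin.last n) ≤ E) :
    (b - 1) * h (Fin.last n) * shiftDefect h m E < 1 := by
  cases n with
  | zero => exact hw.sub_one_mul_mul_shiftDefect_lt_one_of_fin_one (by linarith) hlex hE
  | succ n => exact hw.sub_one_mul_mul_shiftDefect_lt_one_of_fin_add_two hb hdeg hlex hE

theorem one_div_lt_ratio_and_ratio_lt {h : Fin (n + 1) → K} {m : ι → Fin (n + 1) → ℕ}
    (hw : IsChainWeight D b h)
    (hdeg : ∀ i, ∑ j, m i j ≤ D) (hlex : ∀ i i', i < i' → toColex (m i) < toColex (m i'))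
    {top : ι} (htop : ∀ i, i ≤ top) {c : ι → K} {C : K} (hc : ∀ i, |c i| ≤ C)
    (hctop : 1 ≤ |c top|) (hCb : 2 * C ≤ b - 1) :
    1 / (1 + 2 * C / ((b - 1) * (h (Fin.last n) - 1))) <
      ((∑ i, c i * ∏ j, h j ^ m i j) / h (Fin.last n) ^ m top (Fin.last n)) /
        ((∑ i, c i * ∏ j, shiftLast h j ^ m i j) /
          (h (Fin.last n) + 1) ^ m top (Fin.last n)) ∧
    ((∑ i, c i * ∏ j, h j ^ m i j) / h (Fin.last n) ^ m top (Fin.last n)) /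
        ((∑ i, c i * ∏ j, shiftLast h j ^ m i j) /
          (h (Fin.last n) + 1) ^ m top (Fin.last n)) <
      1 + 2 * C / ((b - 1) * (h (Fin.last n) - 1)) := by
  set x := h (Fin.last n)
  set E := m top (Fin.last n)
  have hC : 1 ≤ C := hctop.trans (hc top)
  have hx : 3 ≤ x := (by linarith : 3 ≤ b).trans (hw.le_apply _)
  have hE : ∀ i, m i (Fin.last n) ≤ E := fun i => by
    rcases (htop i).lt_or_eq with hlt | rfl
    · exact Pi.apply_le_of_toColex (hlex i top hlt).le fun j hj => absurd hj (Fin.le_last j).not_gt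
    · exact le_rfl
  have hw' : IsChainWeight D b (shiftLast h) :=
    hw.of_le_last (by simp) (shiftLast_castSucc h)
  have hB : 1 ≤ 2 * |(∑ i, c i * ∏ j, shiftLast h j ^ m i j) /
      (x + 1) ^ E| := by
    have hx1 : 0 < (x + 1) ^ E := by positivity
    calc (1 : K) ≤ ∏ j : Fin n, h j.castSucc ^ m top j.castSucc :=
          one_le_prod fun j _ => one_le_pow₀ (hw.one_le_apply _)
      _ = (∏ j, shiftLast h j ^ m top j) / (x + 1) ^ E := by
          rw [prod_shiftLast_pow_div_pow_last (by linarith) le_rfl, Nat.sub_self, pow_zero, mul_one]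
      _ ≤ 2 * |∑ i, c i * ∏ j, shiftLast h j ^ m i j| / (x + 1) ^ E :=
          div_le_div_of_nonneg_right (hw'.prod_pow_le_two_mul_abs_sum hdeg hlex htop hc hctop hCb)
            hx1.le
      _ = _ := by rw [abs_div, abs_of_pos hx1, mul_div_assoc]
  exact one_div_lt_div_and_div_lt (by linarith) hCb (by linarith) hB
    (hw.abs_sub_le_mul_shiftDefect hc hE)
    (hw.sub_one_mul_mul_shiftDefect_lt_one (by linarith) hdeg hlex hE)

end IsChainWeight

end OrderedField

theorem stmt17 (n t D : ℕ) (C b : ℤ) (hn : 0 < n) (ht : 0 < t)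
    (c : Fin t → ℤ) (m : Fin t → Fin n → ℕ)
    (hc0 : ∀ i, c i ≠ 0) (hcC : ∀ i, |c i| ≤ C)
    (hdeg : ∀ i, ∑ j, m i j ≤ D)
    (hlex : ∀ i i' : Fin t, i < i' →
      ∃ j : Fin n, m i j < m i' j ∧ ∀ j', j < j' → m i j' = m i' j')
    (β : Fin n → ℤ) (hb : b ≥ 2 * C + 1)
    (hβ1 : β ⟨0, hn⟩ ≥ b)
    (hchain : ∀ i j : Fin n, (i : ℕ) + 1 = (j : ℕ) → β i ^ (D + 1) ≤ β j)
    (e : Fin n → ℕ) (he : e = m ⟨t - 1, by omega⟩)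
    (last : Fin n) (hlast : (last : ℕ) = n - 1) :
    (1 : ℚ) / (1 + 2 * (C : ℚ) / (((β ⟨0, hn⟩ : ℚ) - 1) * ((β last : ℚ) - 1))) <
      (((∑ i, c i * ∏ j, β j ^ m i j : ℤ) : ℚ) / (β last : ℚ) ^ e last) /
        (((∑ i, c i * ∏ j, (if j = last then β j + 1 else β j) ^ m i j : ℤ) : ℚ) /
          ((β last : ℚ) + 1) ^ e last) ∧
    (((∑ i, c i * ∏ j, β j ^ m i j : ℤ) : ℚ) / (β last : ℚ) ^ e last) /
        (((∑ i, c i * ∏ j, (if j = last then β j + 1 else β j) ^ m i j : ℤ) : ℚ) /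
          ((β last : ℚ) + 1) ^ e last) <
      1 + 2 * (C : ℚ) / (((β ⟨0, hn⟩ : ℚ) - 1) * ((β last : ℚ) - 1)) := by
  obtain ⟨n, rfl⟩ : ∃ k, n = k + 1 := ⟨n - 1, by omega⟩
  obtain rfl : last = Fin.last n := Fin.ext (by simpa using hlast)
  subst he
  have hC : 1 ≤ C := (Int.one_le_abs (hc0 _)).trans (hcC ⟨t - 1, by omega⟩)
  have hw : IsChainWeight D (β ⟨0, hn⟩ : ℚ) fun j => (β j : ℚ) :=
    ⟨by exact_mod_cast (by linarith : 1 ≤ β ⟨0, hn⟩), le_rfl,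
      fun j => by exact_mod_cast hchain _ _ (by simp)⟩
  push_cast [apply_ite (Int.cast : ℤ → ℚ)]
  exact hw.one_div_lt_ratio_and_ratio_lt hdeg
    (fun i i' hii' => let ⟨j, hlt, htail⟩ := hlex i i' hii'; ⟨j, htail, hlt⟩)
    (fun i => Fin.le_def.2 (Nat.le_sub_one_of_lt i.isLt)) (fun i => by exact_mod_cast hcC i)
    (by exact_mod_cast Int.one_le_abs (hc0 _))
    (by exact_mod_cast (by linarith : 2 * C ≤ β ⟨0, hn⟩ - 1))
end

section
/- Let f, g ∈ ℤ[x] with gcd(f,g)=1 (including content), deg f ≤ D, deg g ≤ D, ‖f‖_∞ ≤ C, ‖g‖_∞ ≤ C. Set H = (D+1)^D C^{2D} and let β ≥ 2CH(H−1)+1 be an integer with g(β) ≠ 0. Write f(β)/g(β) = a/b in lowest terms with μ = gcd(f(β), g(β)) > 0. Then the polynomials f/μ and g/μ have coefficients in the finite set A = {s/t : s,t ∈ ℤ, 0 < t ≤ H, |s/t| ≤ C}, and any two distinct elements of A differ by at least 1/(H(H−1)). -/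
/-!
A vector in the kernel of the Sylvester matrix of `f, g ∈ ℤ[X]` is a relation `f q + g p = 0` with
`deg p < deg f`, `deg q < deg g`; since `ℤ[X]` is a UFD and `f, g` are relatively prime, `f ∣ p` and
`g ∣ q` force `p = q = 0`. So the resultant `r` is nonzero, and as `r` lies in the ideal `(f, g)`,
`μ = gcd(f(β), g(β))` divides `r`. Hadamard's inequality on the columns of the Sylvester matrix gives
`|r| ≤ H`, hence `0 < μ ≤ H` and every `f_i / μ`, `g_i / μ` is a fraction in `A`. Two distinct
fractions with denominators in `(0, H]` differ by at least `1 / (u₁ u₂)`, and `u₁ u₂ ≤ H (H - 1)`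
unless `u₁ = u₂`, in which case they differ by at least `1 / u₁`.
-/

open Polynomial Finset

theorem Real.prod_le_pow_card_of_sum_le_card_mul {ι : Type*} {s : Finset ι} {z : ι → ℝ} {R : ℝ}
    (hz : ∀ i ∈ s, 0 ≤ z i) (h : ∑ i ∈ s, z i ≤ #s * R) : ∏ i ∈ s, z i ≤ R ^ #s := by
  rcases s.eq_empty_or_nonempty with rfl | hs
  · simp
  have hcard : (0 : ℝ) < #s := by exact_mod_cast hs.card_pos
  have amgm := Real.geom_mean_le_arith_mean s 1 z (fun _ _ => zero_le_one) (by simpa) hz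
  simp only [Pi.one_apply, Real.rpow_one, one_mul, sum_const, nsmul_eq_mul, mul_one] at amgm
  have hprod : 0 ≤ ∏ i ∈ s, z i := prod_nonneg hz
  calc ∏ i ∈ s, z i = ((∏ i ∈ s, z i) ^ (#s : ℝ)⁻¹) ^ #s :=
        (Real.rpow_inv_natCast_pow hprod hs.card_pos.ne').symm
    _ ≤ R ^ #s := pow_le_pow_left₀ (Real.rpow_nonneg hprod _)
        (amgm.trans ((div_le_iff₀' hcard).mpr h)) _

namespace Matrix

variable {n : Type*} [Fintype n] [DecidableEq n]

theorem PosSemidef.det_le_pow_of_trace_le {A : Matrix n n ℝ} (hA : A.PosSemidef) {R : ℝ}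
    (h : A.trace ≤ Fintype.card n * R) : A.det ≤ R ^ Fintype.card n := by
  rw [hA.1.trace_eq_sum_eigenvalues] at h
  rw [hA.1.det_eq_prod_eigenvalues]
  have := Real.prod_le_pow_card_of_sum_le_card_mul (s := univ)
    (fun i _ => hA.eigenvalues_nonneg i) (by simpa using h)
  simpa [card_univ] using this

theorem det_sq_le_pow_of_sum_sq_col_le (M : Matrix n n ℝ) {R : ℝ}
    (h : ∀ j, ∑ i, M i j ^ 2 ≤ R) : M.det ^ 2 ≤ R ^ Fintype.card n := by
  have hdiag : ∀ j, (Mᴴ * M) j j = ∑ i, M i j ^ 2 := fun j => by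
    simp [mul_apply, sq]
  calc M.det ^ 2 = (Mᴴ * M).det := by
        rw [det_mul, det_conjTranspose, star_trivial, sq]
    _ ≤ R ^ Fintype.card n := (posSemidef_conjTranspose_mul_self M).det_le_pow_of_trace_le <| by
        simp only [trace, diag_apply, hdiag]
        simpa using sum_le_sum fun j (_ : j ∈ univ) => h j

end Matrix

theorem sum_sq_ite_mem_Icc_le {N j d : ℕ} {a : ℕ → ℝ} {c : ℝ} (ha : ∀ k, |a k| ≤ c) :
    ∑ i : Fin N, (if (i : ℕ) ∈ Set.Icc j (j + d) then a (i - j) else 0) ^ 2 ≤ (d + 1) * c ^ 2 := by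
  have hcard : #{i : Fin N | (i : ℕ) ∈ Set.Icc j (j + d)} ≤ d + 1 :=
    calc _ ≤ #(Finset.Icc j (j + d)) :=
          card_le_card_of_injOn Fin.val (fun i hi => by simpa using hi) Fin.val_injective.injOn
      _ = d + 1 := by simp; omega
  calc ∑ i : Fin N, (if (i : ℕ) ∈ Set.Icc j (j + d) then a (i - j) else 0) ^ 2
      ≤ ∑ i : Fin N, if (i : ℕ) ∈ Set.Icc j (j + d) then c ^ 2 else 0 := by
        gcongr with i
        split_ifs
        · exact sq_le_sq' (abs_le.mp (ha _)).1 (abs_le.mp (ha _)).2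
        · simp
    _ = #{i : Fin N | (i : ℕ) ∈ Set.Icc j (j + d)} * c ^ 2 := by
        rw [sum_ite, sum_const_zero, add_zero, sum_const, nsmul_eq_mul]
    _ ≤ (d + 1) * c ^ 2 := by gcongr; exact_mod_cast hcard

namespace Polynomial

theorem resultant_sq_le {f g : ℝ[X]} {m n d : ℕ} {c : ℝ} (hm : m ≤ d) (hn : n ≤ d)
    (hf : ∀ k, |f.coeff k| ≤ c) (hg : ∀ k, |g.coeff k| ≤ c) :
    f.resultant g m n ^ 2 ≤ ((d + 1) * c ^ 2) ^ (m + n) := by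
  have h := (sylvester f g m n).det_sq_le_pow_of_sum_sq_col_le (R := (d + 1) * c ^ 2) fun j => by
    induction j using Fin.addCases with
    | left j =>
      simp only [sylvester, Matrix.of_apply, Fin.addCases_left]
      exact (sum_sq_ite_mem_Icc_le hg).trans (by gcongr)
    | right j =>
      simp only [sylvester, Matrix.of_apply, Fin.addCases_right]
      exact (sum_sq_ite_mem_Icc_le hf).trans (by gcongr)
  rwa [Fintype.card_fin] at h

theorem abs_resultant_le {f g : ℤ[X]} {D : ℕ} {C : ℤ} (hC : 1 ≤ C) (hf : f.natDegree ≤ D)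
    (hg : g.natDegree ≤ D) (hfC : ∀ k, |f.coeff k| ≤ C) (hgC : ∀ k, |g.coeff k| ≤ C) :
    |f.resultant g| ≤ (D + 1) ^ D * C ^ (2 * D) := by
  have hreal := resultant_sq_le (f := f.map (Int.castRingHom ℝ)) (g := g.map (Int.castRingHom ℝ))
    (c := C) hf hg (fun k => by rw [coeff_map, eq_intCast]; exact_mod_cast hfC k)
    (fun k => by rw [coeff_map, eq_intCast]; exact_mod_cast hgC k)
  rw [resultant_map_map, eq_intCast] at hreal
  have hsq : f.resultant g ^ 2 ≤ ((D + 1) ^ D * C ^ (2 * D)) ^ 2 :=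
    calc f.resultant g ^ 2 ≤ ((D + 1) * C ^ 2) ^ (f.natDegree + g.natDegree) := by
          exact_mod_cast hreal
      _ ≤ ((D + 1) * C ^ 2) ^ (2 * D) := pow_le_pow_right₀ (by nlinarith) (by omega)
      _ = ((D + 1) ^ D * C ^ (2 * D)) ^ 2 := by
          rw [mul_pow, mul_pow, ← pow_mul, ← pow_mul, ← pow_mul]; ring_nf
  exact abs_le_of_sq_le_sq hsq (by positivity)

section Domain

variable {R : Type*} [CommRing R] [IsDomain R]

theorem eq_zero_of_dvd_of_mem_degreeLT {a p : R[X]} (h : a ∣ p) (hp : p ∈ R[X]_a.natDegree) :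
    p = 0 := by
  by_contra hp0
  rw [mem_degreeLT, degree_eq_natDegree hp0, Nat.cast_lt] at hp
  exact (natDegree_le_of_dvd h hp0).not_gt hp

theorem sylvesterMap_injective_of_isRelPrime [DecompositionMonoid R[X]] {f g : R[X]}
    (h : IsRelPrime f g) : Function.Injective (sylvesterMap f g le_rfl le_rfl) := by
  rw [← LinearMap.ker_eq_bot, LinearMap.ker_eq_bot']
  rintro ⟨⟨p, hp⟩, ⟨q, hq⟩⟩ hpq
  have hsum : f * q + g * p = 0 := congrArg Subtype.val hpq
  have hp0 : p = 0 := eq_zero_of_dvd_of_mem_degreeLT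
    (h.dvd_of_dvd_mul_left ⟨-q, by linear_combination hsum⟩) hp
  have hq0 : q = 0 := eq_zero_of_dvd_of_mem_degreeLT
    (h.symm.dvd_of_dvd_mul_left ⟨-p, by linear_combination hsum⟩) hq
  subst hp0 hq0
  rfl

theorem resultant_ne_zero_of_isRelPrime [DecompositionMonoid R[X]] {f g : R[X]}
    (h : IsRelPrime f g) : f.resultant g ≠ 0 := by
  intro h0
  obtain ⟨v, hv, hMv⟩ := Matrix.exists_mulVec_eq_zero_iff.mpr h0
  let b := ((degreeLT.basis R f.natDegree).prod (degreeLT.basis R g.natDegree)).reindex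
    finSumFinEquiv
  have hrepr := LinearMap.toMatrix_mulVec_repr b (degreeLT.basis R _)
    (sylvesterMap f g le_rfl le_rfl) (b.equivFun.symm v)
  rw [toMatrix_sylvesterMap', ← b.equivFun_apply, LinearEquiv.apply_symm_apply, hMv] at hrepr
  have hmap : sylvesterMap f g le_rfl le_rfl (b.equivFun.symm v) = 0 :=
    (degreeLT.basis R _).repr.map_eq_zero_iff.mp (Finsupp.coe_eq_zero.mp hrepr.symm)
  exact hv (b.equivFun.symm.map_eq_zero_iff.mp
    ((injective_iff_map_eq_zero _).mp (sylvesterMap_injective_of_isRelPrime h) _ hmap))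

end Domain

section Bezout

variable {R : Type*} [CommRing R] [IsBezout R]

theorem exists_mul_add_mul_eq_C_resultant_of_isRelPrime {f g : R[X]} (h : IsRelPrime f g) :
    ∃ p q : R[X], f * p + g * q = C (f.resultant g) := by
  by_cases hdeg : f.natDegree ≠ 0 ∨ g.natDegree ≠ 0
  · obtain ⟨p, q, -, -, e⟩ := exists_mul_add_mul_eq_C_resultant f g le_rfl le_rfl hdeg
    exact ⟨p, q, e⟩
  obtain ⟨hf, hg⟩ : f.natDegree = 0 ∧ g.natDegree = 0 := by simpa [not_or] using hdeg
  obtain ⟨a, rfl⟩ := natDegree_eq_zero.mp hf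
  obtain ⟨b, rfl⟩ := natDegree_eq_zero.mp hg
  -- the resultant of two constants is the empty determinant `1`
  obtain ⟨u, v, huv⟩ := (IsRelPrime.of_map C h).isCoprime
  refine ⟨C u, C v, ?_⟩
  rw [natDegree_C, natDegree_C, resultant_C_zero_left, pow_zero, ← huv]
  simp only [map_add, map_mul]
  ring

theorem dvd_resultant_of_dvd_eval {f g : R[X]} (h : IsRelPrime f g) {β d : R}
    (hf : d ∣ f.eval β) (hg : d ∣ g.eval β) : d ∣ f.resultant g := by
  obtain ⟨p, q, hpq⟩ := exists_mul_add_mul_eq_C_resultant_of_isRelPrime h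
  have heval := congrArg (eval β) hpq
  rw [eval_add, eval_mul, eval_mul, eval_C] at heval
  exact heval ▸ dvd_add (hf.mul_right _) (hg.mul_right _)

end Bezout

end Polynomial

section Gap

variable {K : Type*} [Field K] [LinearOrder K] [IsStrictOrderedRing K]

theorem one_div_mul_le_abs_div_sub_div {s₁ s₂ u₁ u₂ : ℤ} (hu₁ : 0 < u₁) (hu₂ : 0 < u₂)
    (hne : (s₁ : K) / u₁ ≠ s₂ / u₂) : 1 / ((u₁ : K) * u₂) ≤ |(s₁ : K) / u₁ - s₂ / u₂| := by
  have hu₁' : (0 : K) < u₁ := by exact_mod_cast hu₁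
  have hu₂' : (0 : K) < u₂ := by exact_mod_cast hu₂
  have hnum : s₁ * u₂ - u₁ * s₂ ≠ 0 := fun h => hne <| by
    rw [div_eq_div_iff hu₁'.ne' hu₂'.ne', mul_comm (s₂ : K)]
    exact_mod_cast sub_eq_zero.mp h
  rw [div_sub_div _ _ hu₁'.ne' hu₂'.ne', abs_div, abs_of_pos (mul_pos hu₁' hu₂')]
  gcongr
  exact_mod_cast Int.one_le_abs hnum

theorem one_div_le_abs_div_sub_div {s₁ s₂ u : ℤ} (hu : 0 < u) (hne : (s₁ : K) / u ≠ s₂ / u) :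
    1 / (u : K) ≤ |(s₁ : K) / u - s₂ / u| := by
  have hu' : (0 : K) < u := by exact_mod_cast hu
  have hs : s₁ - s₂ ≠ 0 := fun h => hne (by rw [sub_eq_zero.mp h])
  rw [← sub_div, abs_div, abs_of_pos hu']
  gcongr
  exact_mod_cast Int.one_le_abs hs

theorem one_div_mul_sub_one_le_abs_div_sub_div {H s₁ s₂ u₁ u₂ : ℤ} (hu₁ : 0 < u₁)
    (hu₁H : u₁ ≤ H) (hu₂ : 0 < u₂) (hu₂H : u₂ ≤ H) (hne : (s₁ : K) / u₁ ≠ s₂ / u₂) :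
    1 / ((H : K) * (H - 1)) ≤ |(s₁ : K) / u₁ - s₂ / u₂| := by
  obtain rfl | hH := eq_or_lt_of_le (show 1 ≤ H by omega)
  · simp
  rcases eq_or_ne u₁ u₂ with rfl | hu
  · have hle : u₁ ≤ H * (H - 1) := by nlinarith
    calc 1 / ((H : K) * (H - 1)) ≤ 1 / (u₁ : K) :=
          one_div_le_one_div_of_le (by exact_mod_cast hu₁) (by exact_mod_cast hle)
      _ ≤ _ := one_div_le_abs_div_sub_div hu₁ hne
  · have hle : u₁ * u₂ ≤ H * (H - 1) := by
      rcases hu.lt_or_gt with h | h <;> nlinarith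
    calc 1 / ((H : K) * (H - 1)) ≤ 1 / ((u₁ : K) * u₂) :=
          one_div_le_one_div_of_le (by exact_mod_cast mul_pos hu₁ hu₂) (by exact_mod_cast hle)
      _ ≤ _ := one_div_mul_le_abs_div_sub_div hu₁ hu₂ hne

end Gap

theorem stmt18_general (f g : Polynomial ℤ) (D : ℕ) (C β : ℤ) (hC1 : 1 ≤ C)
    (hcop : IsRelPrime f g)
    (hdf : f.natDegree ≤ D) (hdg : g.natDegree ≤ D)
    (hfC : ∀ i, |f.coeff i| ≤ C) (hgC : ∀ i, |g.coeff i| ≤ C)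
    (H : ℤ) (hH : H = (D + 1) ^ D * C ^ (2 * D))
    (hgβ : g.eval β ≠ 0)
    (μ : ℤ) (hμ : μ = Int.gcd (f.eval β) (g.eval β))
    (A : Set ℚ) (hA : A = {q : ℚ | ∃ s u : ℤ, 0 < u ∧ u ≤ H ∧
      |(s : ℚ) / (u : ℚ)| ≤ (C : ℚ) ∧ q = (s : ℚ) / (u : ℚ)}) :
    (∀ i, ((f.coeff i : ℚ) / (μ : ℚ)) ∈ A) ∧
    (∀ i, ((g.coeff i : ℚ) / (μ : ℚ)) ∈ A) ∧
    (∀ q₁ ∈ A, ∀ q₂ ∈ A, q₁ ≠ q₂ →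
      (1 : ℚ) / ((H : ℚ) * ((H : ℚ) - 1)) ≤ |q₁ - q₂|) := by
  have hμpos : 0 < μ := hμ ▸ Int.natCast_pos.mpr (Int.gcd_pos_of_ne_zero_right _ hgβ)
  have hμH : μ ≤ H := by
    have hdvd : μ ∣ f.resultant g :=
      hμ ▸ dvd_resultant_of_dvd_eval hcop (Int.gcd_dvd_left _ _) (Int.gcd_dvd_right _ _)
    calc μ ≤ |f.resultant g| := Int.le_of_dvd (abs_pos.mpr (resultant_ne_zero_of_isRelPrime hcop))
          ((dvd_abs _ _).mpr hdvd)
      _ ≤ H := hH ▸ abs_resultant_le hC1 hdf hdg hfC hgC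
  have hmem (s : ℤ) (hs : |s| ≤ C) : (s : ℚ) / μ ∈ A := by
    rw [hA]
    refine ⟨s, μ, hμpos, hμH, ?_, rfl⟩
    rw [abs_div, abs_of_pos (a := (μ : ℚ)) (by exact_mod_cast hμpos)]
    exact (div_le_self (abs_nonneg _) (by exact_mod_cast hμpos)).trans (by exact_mod_cast hs)
  refine ⟨fun i => hmem _ (hfC i), fun i => hmem _ (hgC i), ?_⟩
  rw [hA]
  rintro _ ⟨s₁, u₁, hu₁, hu₁H, -, rfl⟩ _ ⟨s₂, u₂, hu₂, hu₂H, -, rfl⟩ hne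
  exact one_div_mul_sub_one_le_abs_div_sub_div hu₁ hu₁H hu₂ hu₂H hne

theorem stmt18 (f g : Polynomial ℤ) (D : ℕ) (C β : ℤ) (hC1 : 1 ≤ C)
    (hcop : IsRelPrime f g)
    (hdf : f.natDegree ≤ D) (hdg : g.natDegree ≤ D)
    (hfC : ∀ i, |f.coeff i| ≤ C) (hgC : ∀ i, |g.coeff i| ≤ C)
    (H : ℤ) (hH : H = (D + 1) ^ D * C ^ (2 * D))
    (hβ : β ≥ 2 * C * H * (H - 1) + 1)
    (hgβ : g.eval β ≠ 0)
    (μ : ℤ) (hμ : μ = Int.gcd (f.eval β) (g.eval β))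
    (A : Set ℚ) (hA : A = {q : ℚ | ∃ s u : ℤ, 0 < u ∧ u ≤ H ∧
      |(s : ℚ) / (u : ℚ)| ≤ (C : ℚ) ∧ q = (s : ℚ) / (u : ℚ)}) :
    (∀ i, ((f.coeff i : ℚ) / (μ : ℚ)) ∈ A) ∧
    (∀ i, ((g.coeff i : ℚ) / (μ : ℚ)) ∈ A) ∧
    (∀ q₁ ∈ A, ∀ q₂ ∈ A, q₁ ≠ q₂ →
      (1 : ℚ) / ((H : ℚ) * ((H : ℚ) - 1)) ≤ |q₁ - q₂|) :=
  stmt18_general f g D C β hC1 hcop hdf hdg hfC hgC H hH hgβ μ hμ A hA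
end

section
/- Let f, g, f₁, g₁ ∈ ℤ[x₁,…,x_n] with gcd(f,g)=1, all having at most T terms, total degree at most D, and coefficients bounded in absolute value by C. Let c₁ ≤ c₂ ≤ ⋯ ≤ c_n be positive integers such that gcd(f(x+c₁,(x+c₂)^{2D+1},…,(x+c_n)^{(2D+1)^{n−1}}), g(x+c₁,…,(x+c_n)^{(2D+1)^{n−1}})) = 1, and let β ≥ 2TC²+1. Set βᵢ = (β+cᵢ)^{(2D+1)^{i−1}}. If g(β₁,…,β_n) ≠ 0, g₁(β₁,…,β_n) ≠ 0, and f(β₁,…,β_n)·g₁(β₁,…,β_n) = f₁(β₁,…,β_n)·g(β₁,…,β_n), then f·g₁ = f₁·g, hence f₁/g₁ = f/g as rational functions. -/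
/-!
Clear denominators: `P = f * g₁ - f₁ * g` vanishes at `B`, has coefficients of absolute value
at most `2 T C²` and degree at most `2 D` in each variable. Since the `Bᵢ` exceed `2 T C²` and
`Bᵢ ^ (2 D + 1) ≤ Bⱼ` for `i < j`, the value `P(B)` is a base-`B` expansion whose digits can be
read off one variable at a time (the largest `Bᵢ` first), so `P(B) = 0` forces `P = 0`.
-/

open MvPolynomial

namespace Polynomial

theorem abs_eval_lt_pow_of_abs_coeff_lt {p : ℤ[X]} {b : ℤ} {d : ℕ} (hdeg : p.natDegree ≤ d)
    (hcoeff : ∀ k, |p.coeff k| < b) : |p.eval b| < b ^ (d + 1) := by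
  have hb : 0 ≤ b := (abs_nonneg _).trans (hcoeff 0).le
  rw [eval_eq_sum_range' (Nat.lt_succ_of_le hdeg)]
  calc |∑ i ∈ Finset.range (d + 1), p.coeff i * b ^ i|
      ≤ ∑ i ∈ Finset.range (d + 1), (b - 1) * b ^ i := by
        refine (Finset.abs_sum_le_sum_abs _ _).trans (Finset.sum_le_sum fun i _ => ?_)
        rw [abs_mul, abs_pow, abs_of_nonneg hb]
        exact mul_le_mul_of_nonneg_right (Int.le_sub_one_of_lt (hcoeff i)) (pow_nonneg hb i)
    _ = b ^ (d + 1) - 1 := by rw [← Finset.mul_sum, mul_geom_sum]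
    _ < b ^ (d + 1) := sub_one_lt _

theorem eq_zero_of_eval_eq_zero_of_abs_coeff_lt_s19 {p : ℤ[X]} {b : ℤ}
    (hcoeff : ∀ k, |p.coeff k| < b) (heval : p.eval b = 0) : p = 0 := by
  induction hd : p.natDegree generalizing p with
  | zero =>
    rw [eq_C_of_natDegree_eq_zero hd, eval_C] at heval
    rw [eq_C_of_natDegree_eq_zero hd, heval, map_zero]
  | succ d ih =>
    have hb : b ≠ 0 := ((abs_nonneg _).trans_lt (hcoeff 0)).ne'
    have hsplit := X_mul_divX_add p
    have hdigits : b * p.divX.eval b + p.coeff 0 = 0 := by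
      simpa only [eval_add, eval_mul, eval_X, eval_C, heval] using congrArg (eval b) hsplit
    have hcoeff_zero : p.coeff 0 = 0 :=
      Int.eq_zero_of_abs_lt_dvd ⟨-p.divX.eval b, by linarith⟩ (hcoeff 0)
    have hdivX : p.divX = 0 := by
      refine ih (fun k => by rw [coeff_divX]; exact hcoeff (k + 1)) ?_ ?_
      · rw [hcoeff_zero, add_zero] at hdigits
        exact (mul_eq_zero.mp hdigits).resolve_left hb
      · rw [natDegree_divX_eq_natDegree_tsub_one, hd, Nat.add_sub_cancel]
    rw [← hsplit, hdivX, hcoeff_zero, mul_zero, map_zero, add_zero]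

end Polynomial

namespace MvPolynomial

theorem abs_coeff_mul_le {σ : Type*} {p q : MvPolynomial σ ℤ} {a b : ℤ}
    (hp : ∀ s, |p.coeff s| ≤ a) (hq : ∀ s, |q.coeff s| ≤ b) (s : σ →₀ ℕ) :
    |(p * q).coeff s| ≤ p.support.card * (a * b) := by
  classical
  have ha : 0 ≤ a := (abs_nonneg _).trans (hp 0)
  have hb : 0 ≤ b := (abs_nonneg _).trans (hq 0)
  conv_lhs => rw [p.as_sum, Finset.sum_mul, coeff_sum]
  rw [← nsmul_eq_mul]
  refine (Finset.abs_sum_le_sum_abs _ _).trans (Finset.sum_le_card_nsmul _ _ _ fun t _ => ?_)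
  rw [coeff_monomial_mul']
  split_ifs
  · rw [abs_mul]
    exact mul_le_mul (hp t) (hq _) (abs_nonneg _) ha
  · simpa using mul_nonneg ha hb

theorem coeff_rename_equiv {σ τ R : Type*} [CommSemiring R] (e : σ ≃ τ) (p : MvPolynomial σ R)
    (t : τ →₀ ℕ) : (rename e p).coeff t = p.coeff (t.mapDomain e.symm) := by
  have ht : t = (t.mapDomain e.symm).mapDomain e := by
    rw [← Finsupp.mapDomain_comp, e.self_comp_symm, Finsupp.mapDomain_id]
  conv_lhs => rw [ht]
  exact coeff_rename_mapDomain _ e.injective _ _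

theorem eval_eq_eval_map_finSuccEquiv {R : Type*} [CommRing R] {m : ℕ} (B : Fin (m + 1) → R)
    (P : MvPolynomial (Fin (m + 1)) R) :
    eval B P = ((finSuccEquiv R m P).map (eval (Fin.tail B))).eval (B 0) := by
  conv_lhs => rw [← Fin.cons_self_tail B]
  exact eval_eq_eval_mv_eval' _ _ P

section Kronecker

variable {d : ℕ} {H : ℤ}

/- The bases decrease along `Fin m` because `finSuccEquiv` splits off the variable `0`, whose
base must be the largest one. -/
theorem abs_eval_lt_of_kronecker_antitone {m : ℕ} {B : Fin m → ℤ} {P : MvPolynomial (Fin m) ℤ}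
    {N : ℤ}
    (hP : ∀ s, |P.coeff s| ≤ H) (hdeg : ∀ i, P.degreeOf i ≤ d) (hHB : ∀ i, H < B i)
    (hB : ∀ i j, i < j → B j ^ (d + 1) ≤ B i) (hHN : H < N) (hBN : ∀ i, B i ^ (d + 1) ≤ N) :
    |eval B P| < N := by
  induction m generalizing N with
  | zero =>
    rw [eq_C_of_isEmpty P, eval_C]
    exact (hP 0).trans_lt hHN
  | succ m ih =>
    rw [eval_eq_eval_map_finSuccEquiv]
    refine (Polynomial.abs_eval_lt_pow_of_abs_coeff_lt ?_ fun k => ?_).trans_le (hBN 0)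
    · exact Polynomial.natDegree_map_le.trans ((natDegree_finSuccEquiv P).trans_le (hdeg 0))
    · rw [Polynomial.coeff_map]
      exact ih (fun s => by rw [finSuccEquiv_coeff_coeff]; exact hP _)
        (fun j => (degreeOf_coeff_finSuccEquiv P j k).trans (hdeg j.succ))
        (fun i => hHB i.succ) (fun i j hij => hB _ _ (Fin.succ_lt_succ_iff.mpr hij))
        (hHB 0) (fun i => hB _ _ i.succ_pos)

theorem eq_zero_of_eval_eq_zero_of_kronecker_antitone {m : ℕ} {B : Fin m → ℤ}
    {P : MvPolynomial (Fin m) ℤ}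
    (hP : ∀ s, |P.coeff s| ≤ H) (hdeg : ∀ i, P.degreeOf i ≤ d) (hHB : ∀ i, H < B i)
    (hB : ∀ i j, i < j → B j ^ (d + 1) ≤ B i) (heval : eval B P = 0) : P = 0 := by
  induction m with
  | zero =>
    rw [eq_C_of_isEmpty P, eval_C] at heval
    rw [eq_C_of_isEmpty P, heval, map_zero]
  | succ m ih =>
    have hPk_coeff (k : ℕ) (s) : |((finSuccEquiv ℤ m P).coeff k).coeff s| ≤ H := by
      rw [finSuccEquiv_coeff_coeff]; exact hP _
    have hPk_deg (k : ℕ) (j) : ((finSuccEquiv ℤ m P).coeff k).degreeOf j ≤ d :=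
      (degreeOf_coeff_finSuccEquiv P j k).trans (hdeg j.succ)
    have hHB_tail (i : Fin m) : H < Fin.tail B i := hHB i.succ
    have hB_tail (i j : Fin m) (hij : i < j) : Fin.tail B j ^ (d + 1) ≤ Fin.tail B i :=
      hB _ _ (Fin.succ_lt_succ_iff.mpr hij)
    have hmap : (finSuccEquiv ℤ m P).map (eval (Fin.tail B)) = 0 := by
      refine Polynomial.eq_zero_of_eval_eq_zero_of_abs_coeff_lt_s19 (fun k => ?_)
        (by rwa [← eval_eq_eval_map_finSuccEquiv])
      rw [Polynomial.coeff_map]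
      exact abs_eval_lt_of_kronecker_antitone (hPk_coeff k) (hPk_deg k) hHB_tail hB_tail (hHB 0)
        (fun i => hB _ _ i.succ_pos)
    have hfinSucc : finSuccEquiv ℤ m P = 0 := Polynomial.ext fun k =>
      ih (hPk_coeff k) (hPk_deg k) hHB_tail hB_tail
        (by rw [← Polynomial.coeff_map, hmap, Polynomial.coeff_zero])
    simpa using hfinSucc

theorem eq_zero_of_eval_eq_zero_of_kronecker {m : ℕ} {B : Fin m → ℤ} {P : MvPolynomial (Fin m) ℤ}
    (hP : ∀ s, |P.coeff s| ≤ H) (hdeg : ∀ i, P.degreeOf i ≤ d) (hHB : ∀ i, H < B i)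
    (hB : ∀ i j, i < j → B i ^ (d + 1) ≤ B j) (heval : eval B P = 0) : P = 0 := by
  suffices rename Fin.revPerm P = 0 from
    rename_injective _ Fin.revPerm.injective (this.trans (map_zero _).symm)
  refine eq_zero_of_eval_eq_zero_of_kronecker_antitone (B := B ∘ Fin.rev) (fun s => ?_)
    (fun i => ?_) (fun i => hHB _) (fun i j hij => hB _ _ (Fin.rev_lt_rev.mpr hij)) ?_
  · rw [coeff_rename_equiv]; exact hP _
  · rw [← Fin.rev_rev i]
    exact (degreeOf_rename_of_injective Fin.revPerm.injective _).trans_le (hdeg _)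
  · rw [eval_rename]
    convert heval
    ext i; simp

end Kronecker

end MvPolynomial

theorem pow_pow_le_pow_pow_of_lt {R : Type*} [Semiring R] [PartialOrder R] [IsOrderedRing R]
    {a b : R} {e i j : ℕ} (ha : 1 ≤ a) (hab : a ≤ b) (he : 0 < e) (hij : i < j) :
    (a ^ e ^ i) ^ e ≤ b ^ e ^ j :=
  calc (a ^ e ^ i) ^ e = a ^ e ^ (i + 1) := by rw [← pow_mul, pow_succ]
    _ ≤ a ^ e ^ j := pow_le_pow_right₀ ha (Nat.pow_le_pow_right he hij)
    _ ≤ b ^ e ^ j := pow_le_pow_left₀ (zero_le_one.trans ha) hab _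

theorem stmt19_general (n T D : ℕ) (C : ℤ)
    (f g f₁ g₁ : MvPolynomial (Fin n) ℤ)
    (hTf : f.support.card ≤ T)
    (hTf₁ : f₁.support.card ≤ T)
    (hDf : f.totalDegree ≤ D) (hDg : g.totalDegree ≤ D)
    (hDf₁ : f₁.totalDegree ≤ D) (hDg₁ : g₁.totalDegree ≤ D)
    (hfC : ∀ σ, |f.coeff σ| ≤ C) (hgC : ∀ σ, |g.coeff σ| ≤ C)
    (hf₁C : ∀ σ, |f₁.coeff σ| ≤ C) (hg₁C : ∀ σ, |g₁.coeff σ| ≤ C)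
    (c : Fin n → ℤ) (hc0 : ∀ i, 0 < c i)
    (hcmono : ∀ i j : Fin n, i ≤ j → c i ≤ c j)
    (β : ℤ) (hβ : β ≥ 2 * T * C ^ 2 + 1)
    (B : Fin n → ℤ) (hB : ∀ i, B i = (β + c i) ^ (2 * D + 1) ^ (i : ℕ))
    (heq : eval B f * eval B g₁ = eval B f₁ * eval B g) :
    f * g₁ = f₁ * g := by
  have hprod_coeff {p q : MvPolynomial (Fin n) ℤ} (hp : p.support.card ≤ T)
      (hpC : ∀ σ, |p.coeff σ| ≤ C) (hqC : ∀ σ, |q.coeff σ| ≤ C) (σ) :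
      |(p * q).coeff σ| ≤ T * C ^ 2 :=
    (abs_coeff_mul_le hpC hqC σ).trans (by rw [← sq]; gcongr)
  have hprod_deg {p q : MvPolynomial (Fin n) ℤ} (hp : p.totalDegree ≤ D)
      (hq : q.totalDegree ≤ D) (i) : (p * q).degreeOf i ≤ 2 * D :=
    (degreeOf_le_totalDegree _ i).trans ((totalDegree_mul p q).trans (by omega))
  have hcoeff (σ) : |(f * g₁ - f₁ * g).coeff σ| ≤ 2 * T * C ^ 2 := by
    rw [coeff_sub]
    linarith [abs_sub ((f * g₁).coeff σ) ((f₁ * g).coeff σ), hprod_coeff hTf hfC hg₁C σ,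
      hprod_coeff hTf₁ hf₁C hgC σ]
  have hdeg (i) : (f * g₁ - f₁ * g).degreeOf i ≤ 2 * D :=
    (degreeOf_sub_le i _ _).trans (max_le (hprod_deg hDf hDg₁ i) (hprod_deg hDf₁ hDg i))
  have hH : 0 ≤ 2 * T * C ^ 2 := by positivity
  have hbase (i) : 2 * T * C ^ 2 < β + c i := by linarith [hc0 i]
  have hHB (i) : 2 * T * C ^ 2 < B i := by
    rw [hB]
    exact (hbase i).trans_le (le_self_pow₀ (by linarith [hbase i]) (by positivity))
  have hgrow (i j : Fin n) (hij : i < j) : B i ^ (2 * D + 1) ≤ B j := by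
    rw [hB, hB]
    exact pow_pow_le_pow_pow_of_lt (by linarith [hbase i]) (by linarith [hcmono i j hij.le])
      (by omega) hij
  refine sub_eq_zero.mp (eq_zero_of_eval_eq_zero_of_kronecker hcoeff hdeg hHB hgrow ?_)
  rw [map_sub, map_mul, map_mul, heq, sub_self]

theorem stmt19 (n T D : ℕ) (C : ℤ)
    (f g f₁ g₁ : MvPolynomial (Fin n) ℤ)
    (hcop : IsRelPrime f g)
    (hTf : f.support.card ≤ T) (hTg : g.support.card ≤ T)
    (hTf₁ : f₁.support.card ≤ T) (hTg₁ : g₁.support.card ≤ T)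
    (hDf : f.totalDegree ≤ D) (hDg : g.totalDegree ≤ D)
    (hDf₁ : f₁.totalDegree ≤ D) (hDg₁ : g₁.totalDegree ≤ D)
    (hfC : ∀ σ, |f.coeff σ| ≤ C) (hgC : ∀ σ, |g.coeff σ| ≤ C)
    (hf₁C : ∀ σ, |f₁.coeff σ| ≤ C) (hg₁C : ∀ σ, |g₁.coeff σ| ≤ C)
    (c : Fin n → ℤ) (hc0 : ∀ i, 0 < c i)
    (hcmono : ∀ i j : Fin n, i ≤ j → c i ≤ c j)
    (hcopsub : IsRelPrime
      ((aeval fun i : Fin n =>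
        ((Polynomial.X + Polynomial.C (c i) : Polynomial ℤ) ^ (2 * D + 1) ^ (i : ℕ))) f)
      ((aeval fun i : Fin n =>
        ((Polynomial.X + Polynomial.C (c i) : Polynomial ℤ) ^ (2 * D + 1) ^ (i : ℕ))) g))
    (β : ℤ) (hβ : β ≥ 2 * T * C ^ 2 + 1)
    (B : Fin n → ℤ) (hB : ∀ i, B i = (β + c i) ^ (2 * D + 1) ^ (i : ℕ))
    (hgB : eval B g ≠ 0) (hg₁B : eval B g₁ ≠ 0)
    (heq : eval B f * eval B g₁ = eval B f₁ * eval B g) :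
    f * g₁ = f₁ * g :=
  stmt19_general n T D C f g f₁ g₁ hTf hTf₁ hDf hDg hDf₁ hDg₁ hfC hgC hf₁C hg₁C c hc0 hcmono β hβ B
    hB heq
end
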